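/- arXiv:1903.03504 — 5 statements merged into one kernel-verified Lean document; each statement's English description precedes it below -/
import Mathlib

section
/- The language L_Eq = {w ∈ {a,b}* : |w|_a = |w|_b} (words with an equal number of a's and b's) is not counting-regular: there is no regular language L' over any finite alphabet with f_{L'}(n) = f_{L_Eq}(n) for all n. -/
/-- The counting function of a language: the number of words of length `n`. -/
noncomputable def countFn {α : Type*} (L : Set (List α)) (n : ℕ) : ℕ :=
  Set.ncard {w | w ∈ L ∧ w.length = n}

/-- A language is regular if it is accepted by a DFA with finitely many states. -/
def IsRegularLang {α : Type*} (L : Set (List α)) : Prop :=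
  ∃ (σ : Type) (_ : Fintype σ) (M : DFA α σ), ∀ w, w ∈ M.accepts ↔ w ∈ L

/-- A language is counting-regular if some regular language over a (possibly different)
finite alphabet has the same counting function. -/
def CountingRegular {α : Type*} (L : Set (List α)) : Prop :=
  ∃ (β : Type) (_ : Fintype β) (L' : Set (List β)),
    IsRegularLang L' ∧ ∀ n, countFn L' n = countFn L n

/-!
For a DFA `M` and a finite `R` such as `ZMod p`, the vector `q ↦ #{w ∈ M.acceptsFrom q, |w| = n}`
(cast to `R`) evolves by a fixed map on the finite set `σ → R`, so the counting function of a
regular language is eventually periodic modulo any prime `p`. For the balanced language the count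
at length `2m` is the central binomial coefficient `C(2m, m)`. Modulo an odd prime `p`,
`C(2p^k, p^k) ≡ 2` by Lucas' theorem, whereas `p ∣ C(2m, m)` whenever `m < p^k ≤ 2m`, since
adding `m + m` in base `p` carries into digit `k` (Kummer). An eventual period `P` of the counts
is also one of `2P`, and comparing the lengths `2m` and `2m + 2P` for `m + P = p^k` with `p^k`
large gives a contradiction.
-/

section CountFn

variable {α : Type*}

theorem countFn_congr {L L' : Set (List α)} {n : ℕ}
    (h : ∀ w : List α, w.length = n → (w ∈ L ↔ w ∈ L')) : countFn L n = countFn L' n := by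
  unfold countFn
  congr 1
  ext w
  simp only [Set.mem_ofPred_eq]
  exact ⟨fun ⟨hw, hn⟩ => ⟨(h w hn).1 hw, hn⟩, fun ⟨hw, hn⟩ => ⟨(h w hn).2 hw, hn⟩⟩

theorem finite_setOf_mem_and_length_eq [Finite α] (L : Set (List α)) (n : ℕ) :
    {w | w ∈ L ∧ w.length = n}.Finite :=
  (List.finite_length_eq α n).subset fun _ hw => hw.2

theorem countFn_succ [Fintype α] (L : Set (List α)) (n : ℕ) :
    countFn L (n + 1) = ∑ a : α, countFn {w | a :: w ∈ L} n := by
  have : ∀ a : α, Finite {w | w ∈ {w | a :: w ∈ L} ∧ w.length = n} := fun a =>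
    (finite_setOf_mem_and_length_eq _ n).to_subtype
  let cons : (Σ a : α, {w | w ∈ {w | a :: w ∈ L} ∧ w.length = n}) →
      {w | w ∈ L ∧ w.length = n + 1} := fun x => ⟨x.1 :: x.2.1, x.2.2.1, by simp [x.2.2.2]⟩
  have hcons : Function.Bijective cons := by
    constructor
    · rintro ⟨a, w, hw⟩ ⟨b, v, hv⟩ h
      obtain ⟨rfl, rfl⟩ := List.cons_eq_cons.1 (congrArg Subtype.val h)
      rfl
    · rintro ⟨_ | ⟨a, w⟩, hL, hn⟩
      · simp at hn
      · exact ⟨⟨a, w, hL, by simpa using hn⟩, rfl⟩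
  simp only [countFn, ← Nat.card_coe_set_eq]
  rw [← Nat.card_sigma]
  exact (Nat.card_congr (Equiv.ofBijective cons hcons)).symm

theorem countFn_empty (n : ℕ) : countFn (∅ : Set (List α)) n = 0 := by
  simp [countFn]

theorem countFn_zero (L : Set (List α)) [Decidable ([] ∈ L)] :
    countFn L 0 = if [] ∈ L then 1 else 0 := by
  split_ifs with h
  · rw [countFn, ← Set.ncard_singleton ([] : List α)]
    congr 1
    ext w
    simp +contextual [List.length_eq_zero_iff, h]
  · refine (countFn_congr (L' := ∅) fun w hw => ?_).trans (countFn_empty 0)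
    simp_all [List.length_eq_zero_iff]

end CountFn

theorem DFA.countFn_acceptsFrom_succ {α σ : Type*} [Fintype α] (M : DFA α σ) (q : σ) (n : ℕ) :
    countFn (M.acceptsFrom q) (n + 1) = ∑ a : α, countFn (M.acceptsFrom (M.step q a)) n :=
  countFn_succ _ n

def EventuallyPeriodic {β : Type*} (f : ℕ → β) : Prop :=
  ∃ N P, 0 < P ∧ ∀ n ≥ N, f (n + P) = f n

theorem EventuallyPeriodic.comp {β γ : Type*} {f : ℕ → β} (hf : EventuallyPeriodic f)
    (g : β → γ) : EventuallyPeriodic (g ∘ f) := by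
  obtain ⟨N, P, hP, hper⟩ := hf
  exact ⟨N, P, hP, fun n hn => congrArg g (hper n hn)⟩

theorem Function.eventuallyPeriodic_iterate {β : Type*} [Finite β] (F : β → β) (x : β) :
    EventuallyPeriodic fun n => F^[n] x := by
  obtain ⟨i, j, hij, heq⟩ :=
    Set.finite_univ.exists_lt_map_eq_of_forall_mem (f := fun n => F^[n] x) fun _ => Set.mem_univ _
  refine ⟨i, j - i, by omega, fun n hn => ?_⟩
  obtain ⟨t, rfl⟩ := Nat.exists_eq_add_of_le hn
  dsimp only
  rw [show i + t + (j - i) = t + j by omega, Function.iterate_add_apply, ← heq,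
    ← Function.iterate_add_apply, Nat.add_comm]

theorem DFA.eventuallyPeriodic_countFn_cast {α σ : Type*} [Fintype α] [Finite σ]
    (M : DFA α σ) (R : Type*) [AddCommMonoidWithOne R] [Finite R] :
    EventuallyPeriodic fun n => (countFn M.accepts n : R) := by
  let F : (σ → R) → σ → R := fun v q => ∑ a : α, v (M.step q a)
  let u : ℕ → σ → R := fun n q => countFn (M.acceptsFrom q) n
  have hu : ∀ n, u n = F^[n] (u 0) := by
    intro n
    induction n with
    | zero => rfl
    | succ n ih =>
      rw [Function.iterate_succ_apply', ← ih]
      funext q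
      simp only [u, F, M.countFn_acceptsFrom_succ, Nat.cast_sum]
  have := (Function.eventuallyPeriodic_iterate F (u 0)).comp (fun v => v M.start)
  simp only [Function.comp_def, ← hu] at this
  exact this

theorem IsRegularLang.eventuallyPeriodic_countFn_cast {α : Type*} [Fintype α]
    {L : Set (List α)} (hL : IsRegularLang L) (R : Type*) [AddCommMonoidWithOne R] [Finite R] :
    EventuallyPeriodic fun n => (countFn L n : R) := by
  obtain ⟨σ, _, M, hM⟩ := hL
  obtain rfl : M.accepts = L := Set.ext hM
  exact M.eventuallyPeriodic_countFn_cast R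

theorem CountingRegular.eventuallyPeriodic_countFn_cast {α : Type*} {L : Set (List α)}
    (hL : CountingRegular L) (R : Type*) [AddCommMonoidWithOne R] [Finite R] :
    EventuallyPeriodic fun n => (countFn L n : R) := by
  obtain ⟨β, _, L', hL', hcount⟩ := hL
  simpa only [hcount] using hL'.eventuallyPeriodic_countFn_cast R

theorem countFn_count_one_eq (n m : ℕ) :
    countFn {w : List (Fin 2) | w.count 1 = m} n = n.choose m := by
  induction n generalizing m with
  | zero => rcases m with _ | m <;> simp [countFn_zero]
  | succ n ih =>
    rw [countFn_succ, Fin.sum_univ_two]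
    rcases m with _ | m
    · simp [ih, countFn_empty]
    · have : {w : List (Fin 2) | 1 + w.count 1 = m + 1} = {w | w.count 1 = m} := by
        ext w
        simp only [Set.mem_ofPred_eq]
        omega
      simp [ih, this, Nat.choose_succ_succ', add_comm]

theorem List.count_zero_add_count_one (w : List (Fin 2)) : w.count 0 + w.count 1 = w.length := by
  induction w with
  | nil => rfl
  | cons a w ih => fin_cases a <;> simp <;> omega

theorem countFn_balanced_two_mul (m : ℕ) :
    countFn {w : List (Fin 2) | w.count 0 = w.count 1} (2 * m) = m.centralBinom := by
  rw [Nat.centralBinom_eq_two_mul_choose, ← countFn_count_one_eq]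
  refine countFn_congr fun w hw => ?_
  have := w.count_zero_add_count_one
  simp only [Set.mem_ofPred_eq]
  omega

theorem Nat.centralBinom_prime_pow_modEq {p : ℕ} [Fact p.Prime] (k : ℕ) :
    (p ^ k).centralBinom ≡ 2 [MOD p] := by
  simpa [Nat.centralBinom_eq_two_mul_choose, mul_comm 2] using
    Choose.choose_pow_mul_pow_mul_modEq_choose_nat (p := p) (k := k) (a := 2) (b := 1)

theorem Nat.Prime.dvd_centralBinom_of_lt_pow_of_pow_le {p m k : ℕ} (hp : p.Prime)
    (hm : m < p ^ k) (hk : p ^ k ≤ 2 * m) : p ∣ m.centralBinom := by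
  have hk0 : k ≠ 0 := by rintro rfl; rw [pow_zero] at hm hk; omega
  have hcarry : k ∈ (Finset.Ico 1 (2 * m + 1)).filter
      fun i => p ^ i ≤ m % p ^ i + (2 * m - m) % p ^ i := by
    have : k < p ^ k := Nat.lt_pow_self hp.one_lt
    rw [Finset.mem_filter, Finset.mem_Ico, show 2 * m - m = m by omega, Nat.mod_eq_of_lt hm]
    omega
  have hmult := hp.emultiplicity_choose (n := 2 * m) (k := m) (b := 2 * m + 1) (by omega)
    (Nat.lt_succ_of_le (Nat.log_le_self _ _))
  rw [Nat.centralBinom_eq_two_mul_choose, ← pow_one p]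
  apply pow_dvd_of_le_emultiplicity
  rw [hmult]
  exact_mod_cast Finset.card_pos.2 ⟨k, hcarry⟩

theorem not_eventuallyPeriodic_countFn_balanced_cast {p : ℕ} [Fact p.Prime] (hp : p ≠ 2) :
    ¬ EventuallyPeriodic fun n =>
      (countFn {w : List (Fin 2) | w.count 0 = w.count 1} n : ZMod p) := by
  rintro ⟨N, P, hP, hper⟩
  have hp' : p.Prime := Fact.out
  obtain ⟨k, hk⟩ : ∃ k, N + 2 * P < p ^ k := ⟨_, Nat.lt_pow_self hp'.one_lt⟩
  obtain ⟨m, hm⟩ : ∃ m, m + P = p ^ k := ⟨p ^ k - P, by omega⟩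
  have hdvd : p ∣ m.centralBinom :=
    hp'.dvd_centralBinom_of_lt_pow_of_pow_le (k := k) (by omega) (by omega)
  have hstep := (hper _ (by omega)).trans (hper (2 * m) (by omega))
  dsimp only at hstep
  rw [show 2 * m + P + P = 2 * p ^ k by omega, countFn_balanced_two_mul, countFn_balanced_two_mul,
    (ZMod.natCast_eq_zero_iff _ p).2 hdvd,
    (ZMod.natCast_eq_natCast_iff _ _ p).2 (Nat.centralBinom_prime_pow_modEq k)] at hstep
  exact hp ((Nat.prime_dvd_prime_iff_eq hp' Nat.prime_two).1
    ((ZMod.natCast_eq_zero_iff 2 p).1 hstep))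

/-- The language of words over `{a, b}` (here `{0, 1}`) with equally many `a`'s and `b`'s
is not counting-regular. -/
theorem stmt1 : ¬ CountingRegular {w : List (Fin 2) | w.count 0 = w.count 1} := fun h =>
  not_eventuallyPeriodic_countFn_balanced_cast (p := 3) (by norm_num)
    (h.eventuallyPeriodic_countFn_cast (ZMod 3))
end

section
/- The language S = {a^n b v₁ a^n v₂ : n ≥ 1, v₁, v₂ ∈ {a,b}*} over the alphabet {a,b} is not counting-regular. -/
open List Set

namespace CRAux


lemma ncard_biUnion {α ι : Type*} (s : Finset ι) (f : ι → Set α)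
    (hfin : ∀ i ∈ s, (f i).Finite)
    (hdisj : ∀ i ∈ s, ∀ j ∈ s, i ≠ j → Disjoint (f i) (f j)) :
    (⋃ i ∈ s, f i).ncard = ∑ i ∈ s, (f i).ncard := by
  classical
  induction s using Finset.induction with
  | empty => simp
  | @insert a s hnotmem ih =>
    rw [Finset.set_biUnion_insert, Finset.sum_insert hnotmem]
    rw [Set.ncard_union_eq ?_ (hfin a (Finset.mem_insert_self a s)) ?_, ih]
    · exact fun i hi => hfin i (Finset.mem_insert_of_mem hi)
    · exact fun i hi j hj hij => hdisj i (Finset.mem_insert_of_mem hi) j (Finset.mem_insert_of_mem hj) hij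
    · exact Set.disjoint_iUnion₂_right.2 fun i hi =>
        hdisj a (Finset.mem_insert_self a s) i (Finset.mem_insert_of_mem hi)
          (fun h => hnotmem (h ▸ hi))
    · exact Set.Finite.biUnion s.finite_toSet
        (fun i hi => hfin i (Finset.mem_insert_of_mem hi))




lemma replicate_infix_replicate_iff {n i : ℕ} :
    (List.replicate n (0:Fin 2)) <:+: List.replicate i (0:Fin 2) ↔ n ≤ i := by
  constructor
  · intro h
    simpa using (List.replicate_sublist_replicate (0:Fin 2)).1 h.sublist
  · intro h
    refine ⟨[], List.replicate (i - n) 0, ?_⟩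
    simp [← List.replicate_add, Nat.add_sub_cancel' h]

lemma infix_split {n : ℕ} (hn : 1 ≤ n) (u v : List (Fin 2)) :
    (List.replicate n (0:Fin 2)) <:+: (u ++ [1] ++ v) ↔
      ((List.replicate n (0:Fin 2)) <:+: u ∨ (List.replicate n (0:Fin 2)) <:+: v) := by
  constructor
  · rintro ⟨s, t, hst⟩
    rw [List.append_assoc, List.append_assoc] at hst
    rcases List.append_eq_append_iff.1 hst with ⟨a', ha1, ha2⟩ | ⟨c', hc1, hc2⟩
    · -- u = s ++ a', replicate n 0 ++ t = a' ++ ([1] ++ v)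
      by_cases hlen : n ≤ a'.length
      · left
        have h1 : a' <+: List.replicate n (0:Fin 2) ++ t := ⟨[1] ++ v, by simpa using ha2.symm⟩
        have h2 : List.replicate n (0:Fin 2) <+: List.replicate n (0:Fin 2) ++ t :=
          List.prefix_append _ _
        have h3 : List.replicate n (0:Fin 2) <+: a' :=
          List.prefix_of_prefix_length_le h2 h1 (by simpa using hlen)
        exact h3.isInfix.trans ⟨s, [], by simp [ha1]⟩
      · exfalso
        push_neg at hlen
        have hd : (List.replicate n (0:Fin 2) ++ t).drop a'.length =
            (a' ++ ([1] ++ v)).drop a'.length := by rw [ha2]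
        rw [List.drop_left] at hd
        rw [List.drop_append_of_le_length (by simpa using hlen.le),
          List.drop_replicate] at hd
        have hpos : 1 ≤ n - a'.length := by omega
        rw [show n - a'.length = (n - a'.length - 1) + 1 by omega, List.replicate_succ] at hd
        simpa using congrArg (fun l => l.head?) hd
    · -- s = u ++ c', [1] ++ v = c' ++ (replicate n 0 ++ t)
      match c' with
      | [] =>
        exfalso
        simp only [List.nil_append] at hc2
        rw [show n = (n-1)+1 by omega, List.replicate_succ] at hc2
        simpa using congrArg (fun l => l.head?) hc2
      | c0 :: c'' =>
        right
        simp only [List.cons_append, List.singleton_append, List.cons.injEq] at hc2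
        refine ⟨c'', t, ?_⟩
        have := hc2.2
        simp only [List.nil_append] at this
        rw [List.append_assoc, ← this]
  · rintro (h | h)
    · exact h.trans (List.append_assoc u [1] v ▸ (u.prefix_append _).isInfix)
    · exact h.trans ((List.suffix_append _ v).isInfix)

lemma zero_run_unique {i j : ℕ} {x y : List (Fin 2)}
    (h : List.replicate i (0:Fin 2) ++ [1] ++ x = List.replicate j (0:Fin 2) ++ [1] ++ y) :
    i = j ∧ x = y := by
  induction i generalizing j with
  | zero =>
    match j with
    | 0 => simpa using h
    | j+1 =>
      rw [List.replicate_succ] at h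
      simpa using congrArg (fun l => l.head?) h
  | succ i ih =>
    match j with
    | 0 =>
      rw [List.replicate_succ] at h
      simpa using congrArg (fun l => l.head?) h
    | j+1 =>
      rw [List.replicate_succ, List.replicate_succ (n := j)] at h
      simp only [List.cons_append, List.cons.injEq, true_and] at h
      obtain ⟨h1, h2⟩ := ih h
      exact ⟨by omega, h2⟩

lemma decomp (w : List (Fin 2)) :
    (∃ i x, w = List.replicate i (0:Fin 2) ++ [1] ++ x) ∨ w = List.replicate w.length 0 := by
  induction w with
  | nil => right; rfl
  | cons a w ih =>
    by_cases ha : a = 0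
    · subst ha
      rcases ih with ⟨i, x, hix⟩ | hrep
      · exact Or.inl ⟨i+1, x, by rw [hix]; simp [List.replicate_succ]⟩
      · right; rw [List.length_cons, List.replicate_succ]; rw [← hrep]
    · have ha1 : a = 1 := by omega
      exact Or.inl ⟨0, w, by simp [ha1]⟩



noncomputable def Infc (n ℓ : ℕ) : ℕ :=
  Set.ncard {w : List (Fin 2) | w.length = ℓ ∧ (List.replicate n (0:Fin 2)) <:+: w}

noncomputable def Avc (n ℓ : ℕ) : ℕ :=
  Set.ncard {w : List (Fin 2) | w.length = ℓ ∧ ¬ (List.replicate n (0:Fin 2)) <:+: w}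

lemma ncard_length_eq (α : Type*) [Fintype α] (n : ℕ) :
    {w : List α | w.length = n}.ncard = Fintype.card α ^ n := by
  rw [← Nat.card_coe_set_eq]
  rw [← card_vector (α := α) n, ← Nat.card_eq_fintype_card]
  rfl

lemma infc_add_avc (n ℓ : ℕ) : Infc n ℓ + Avc n ℓ = 2 ^ ℓ := by
  classical
  rw [Infc, Avc, ← Set.ncard_union_eq ?_ ?_ ?_]
  · have : {w : List (Fin 2) | w.length = ℓ ∧ (List.replicate n (0:Fin 2)) <:+: w} ∪
        {w : List (Fin 2) | w.length = ℓ ∧ ¬ (List.replicate n (0:Fin 2)) <:+: w} =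
        {w : List (Fin 2) | w.length = ℓ} := by
      ext w; by_cases h : (List.replicate n (0:Fin 2)) <:+: w <;> simp [h]
    rw [this, ncard_length_eq]
    norm_num
  · rw [Set.disjoint_iff_inter_eq_empty]
    ext w; simp; tauto
  · exact (List.finite_length_eq (Fin 2) ℓ).subset (fun w hw => hw.1)
  · exact (List.finite_length_eq (Fin 2) ℓ).subset (fun w hw => hw.1)

lemma avc_of_lt {n ℓ : ℕ} (h : ℓ < n) : Avc n ℓ = 2 ^ ℓ := by
  have : {w : List (Fin 2) | w.length = ℓ ∧ ¬ (List.replicate n (0:Fin 2)) <:+: w} =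
      {w : List (Fin 2) | w.length = ℓ} := by
    ext w
    simp only [Set.mem_setOf_eq, and_iff_left_iff_imp]
    intro hw hinf
    have := hinf.length_le
    simp [hw] at this
    omega
  rw [Avc, this, ncard_length_eq]
  norm_num

lemma infc_zero_len {n : ℕ} (hn : 1 ≤ n) : Infc n 0 = 0 := by
  rw [Infc]
  convert Set.ncard_empty (List (Fin 2))
  ext w
  simp only [Set.mem_setOf_eq, Set.mem_empty_iff_false, iff_false, not_and]
  intro hw hinf
  have := hinf.length_le
  simp [hw] at this
  omega





lemma ncard_run_biUnion (s : Finset ℕ) (r : ℕ → ℕ) (hr : Set.InjOn r s)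
    (T : ℕ → Set (List (Fin 2))) (hT : ∀ i ∈ s, (T i).Finite) :
    (⋃ i ∈ s, (fun x => List.replicate (r i) (0:Fin 2) ++ [1] ++ x) '' T i).ncard
      = ∑ i ∈ s, (T i).ncard := by
  rw [ncard_biUnion]
  · refine Finset.sum_congr rfl fun i _ => ?_
    exact Set.ncard_image_of_injective _ (fun x y hxy => (zero_run_unique hxy).2)
  · exact fun i hi => ((hT i hi).image _)
  · intro i hi j hj hij
    rw [Set.disjoint_left]
    rintro w ⟨x, _, rfl⟩ ⟨y, _, hy⟩
    exact hij (hr hi hj (zero_run_unique hy.symm).1)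

lemma countFn_S_eq (m : ℕ) :
    countFn {w : List (Fin 2) | ∃ (n : ℕ) (v₁ v₂ : List (Fin 2)), 1 ≤ n ∧
      w = List.replicate n 0 ++ [1] ++ v₁ ++ List.replicate n 0 ++ v₂} m
      = ∑ n ∈ Finset.Icc 1 m, Infc n (m - n - 1) := by
  rw [countFn]
  show ({w : List (Fin 2) | (∃ (n : ℕ) (v₁ v₂ : List (Fin 2)), 1 ≤ n ∧
      w = List.replicate n 0 ++ [1] ++ v₁ ++ List.replicate n 0 ++ v₂) ∧ w.length = m}).ncard = _
  have hset : {w : List (Fin 2) | (∃ (n : ℕ) (v₁ v₂ : List (Fin 2)), 1 ≤ n ∧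
      w = List.replicate n 0 ++ [1] ++ v₁ ++ List.replicate n 0 ++ v₂) ∧ w.length = m}
      = ⋃ n ∈ Finset.Icc 1 m, (fun u => List.replicate n (0:Fin 2) ++ [1] ++ u) ''
          {u : List (Fin 2) | u.length = m - n - 1 ∧ (List.replicate n (0:Fin 2)) <:+: u} := by
    ext w
    simp only [Set.mem_setOf_eq, Set.mem_iUnion, Set.mem_image, Finset.mem_Icc, exists_prop]
    constructor
    · rintro ⟨⟨n, v₁, v₂, hn, rfl⟩, hlen⟩
      simp only [List.length_append, List.length_replicate, List.length_cons,
        List.length_nil] at hlen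
      refine ⟨n, ⟨hn, by omega⟩, v₁ ++ List.replicate n 0 ++ v₂, ⟨?_, ?_⟩, by simp⟩
      · simp only [List.length_append, List.length_replicate]; omega
      · exact ⟨v₁, v₂, by simp⟩
    · rintro ⟨n, ⟨hn, hnm⟩, u, ⟨hlen, ⟨s, t, hst⟩⟩, rfl⟩
      have hun : n ≤ u.length := by
        have : (List.replicate n (0:Fin 2)).length ≤ u.length :=
          List.IsInfix.length_le ⟨s, t, hst⟩
        simpa using this
      constructor
      · refine ⟨n, s, t, hn, ?_⟩
        rw [← hst]; simp
      · simp only [List.length_append, List.length_replicate, List.length_cons,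
          List.length_nil, hlen]
        omega
  rw [hset, ncard_run_biUnion _ (fun i => i) (fun a _ b _ h => h) _
    (fun i _ => (List.finite_length_eq (Fin 2) (m - i - 1)).subset (fun u hu => hu.1))]
  rfl

lemma avc_rec {n ℓ : ℕ} (hn : 1 ≤ n) (hℓ : n ≤ ℓ) :
    Avc n ℓ = ∑ i ∈ Finset.range n, Avc n (ℓ - 1 - i) := by
  rw [Avc]
  have hset : {w : List (Fin 2) | w.length = ℓ ∧ ¬ (List.replicate n (0:Fin 2)) <:+: w}
      = ⋃ i ∈ Finset.range n, (fun x => List.replicate i (0:Fin 2) ++ [1] ++ x) ''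
          {x : List (Fin 2) | x.length = ℓ - 1 - i ∧ ¬ (List.replicate n (0:Fin 2)) <:+: x} := by
    ext w
    simp only [Set.mem_setOf_eq, Set.mem_iUnion, Set.mem_image, Finset.mem_range, exists_prop]
    constructor
    · rintro ⟨hlen, havoid⟩
      rcases decomp w with ⟨i, x, rfl⟩ | hrep
      · rw [infix_split hn] at havoid
        push_neg at havoid
        have hin : i < n := by
          by_contra hcon
          exact havoid.1 (replicate_infix_replicate_iff.2 (by omega))
        simp only [List.length_append, List.length_replicate, List.length_cons,
          List.length_nil] at hlen
        exact ⟨i, hin, x, ⟨by omega, havoid.2⟩, rfl⟩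
      · exfalso
        apply havoid
        rw [hrep, hlen]
        exact replicate_infix_replicate_iff.2 hℓ
    · rintro ⟨i, hin, x, ⟨hxlen, hxavoid⟩, rfl⟩
      constructor
      · simp only [List.length_append, List.length_replicate, List.length_cons,
          List.length_nil, hxlen]
        omega
      · rw [infix_split hn]
        push_neg
        refine ⟨fun hcon => ?_, hxavoid⟩
        have := replicate_infix_replicate_iff.1 hcon
        omega
  rw [hset, ncard_run_biUnion _ (fun i => i) (fun a _ b _ h => h) _
    (fun i _ => (List.finite_length_eq (Fin 2) (ℓ - 1 - i)).subset (fun u hu => hu.1))]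
  rfl




noncomputable def ap (n ℓ : ℕ) : ZMod 2 := (Avc n ℓ : ZMod 2)

lemma ap_rec {n ℓ : ℕ} (hn : 1 ≤ n) (hℓ : n ≤ ℓ) :
    ap n ℓ = ∑ j ∈ Finset.range n, ap n (ℓ - n + j) := by
  rw [ap, avc_rec hn hℓ, Nat.cast_sum, ← Finset.sum_range_reflect]
  refine Finset.sum_congr rfl fun i hi => ?_
  simp only [Finset.mem_range] at hi
  rw [ap]
  congr 2
  omega

lemma ap_of_lt {n ℓ : ℕ} (h : ℓ < n) : ap n ℓ = if ℓ = 0 then 1 else 0 := by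
  rw [ap, avc_of_lt h]
  match ℓ with
  | 0 => norm_num
  | ℓ+1 =>
    rw [if_neg (by omega), pow_succ, Nat.cast_mul,
      show ((2:ℕ) : ZMod 2) = 0 by decide, mul_zero]

lemma ap_self {n : ℕ} (hn : 1 ≤ n) : ap n n = 1 := by
  rw [ap_rec hn le_rfl]
  have : ∀ j ∈ Finset.range n, ap n (n - n + j) = if j = 0 then 1 else 0 := by
    intro j hj
    simp only [Finset.mem_range] at hj
    rw [Nat.sub_self, Nat.zero_add]
    exact ap_of_lt hj
  rw [Finset.sum_congr rfl this, Finset.sum_ite_eq' (Finset.range n) 0 (fun _ => (1 : ZMod 2))]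
  simp only [Finset.mem_range]
  rw [if_pos (by omega)]

lemma ap_period {n : ℕ} (hn : 1 ≤ n) (ℓ : ℕ) : ap n (ℓ + (n + 1)) = ap n ℓ := by
  have h1 : ap n (ℓ + (n + 1)) = ∑ j ∈ Finset.range n, ap n (ℓ + 1 + j) := by
    rw [ap_rec hn (by omega)]
    exact Finset.sum_congr rfl fun i _ => by congr 1; omega
  have h2 : ap n (ℓ + n) = ∑ j ∈ Finset.range n, ap n (ℓ + j) := by
    rw [ap_rec hn (by omega)]
    exact Finset.sum_congr rfl fun i _ => by congr 1; omega
  have key : ap n (ℓ + (n + 1)) + ap n (ℓ + n) = ap n (ℓ + n) + ap n ℓ := by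
    rw [h1, h2, ← Finset.sum_add_distrib]
    have hterm : ∀ j : ℕ, ap n (ℓ + 1 + j) + ap n (ℓ + j)
        = (fun j => ap n (ℓ + j)) (j + 1) - (fun j => ap n (ℓ + j)) j := by
      intro j
      rw [CharTwo.sub_eq_add]
      congr 2
      omega
    rw [Finset.sum_congr rfl (fun j _ => hterm j), Finset.sum_range_sub (fun j => ap n (ℓ + j)) n]
    simp only [Nat.add_zero]
    rw [CharTwo.sub_eq_add, ← h2]
  exact add_right_cancel (key.trans (add_comm _ _))

lemma ap_mod {n : ℕ} (hn : 1 ≤ n) (ℓ : ℕ) : ap n ℓ = ap n (ℓ % (n + 1)) := by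
  induction ℓ using Nat.strong_induction_on with
  | _ ℓ ih =>
    by_cases h : ℓ < n + 1
    · rw [Nat.mod_eq_of_lt h]
    · push_neg at h
      have h1 : ℓ = (ℓ - (n + 1)) + (n + 1) := by omega
      rw [h1, ap_period hn, ih (ℓ - (n+1)) (by omega), Nat.add_mod_right]

lemma ap_closed {n : ℕ} (hn : 1 ≤ n) (ℓ : ℕ) :
    ap n ℓ = if ℓ % (n+1) = 0 ∨ ℓ % (n+1) = n then 1 else 0 := by
  rw [ap_mod hn]
  have hr : ℓ % (n+1) < n + 1 := Nat.mod_lt _ (by omega)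
  set r := ℓ % (n+1) with hrdef
  by_cases h : r = n
  · rw [h, ap_self hn, if_pos (Or.inr rfl)]
  · have : r < n := by omega
    rw [ap_of_lt this]
    by_cases h0 : r = 0
    · rw [if_pos (Or.inl h0), if_pos h0]
    · rw [if_neg h0, if_neg (by tauto)]




lemma ip_eq_ap {n ℓ : ℕ} (hℓ : 1 ≤ ℓ) : (Infc n ℓ : ZMod 2) = ap n ℓ := by
  have h := infc_add_avc n ℓ
  have : ((Infc n ℓ + Avc n ℓ : ℕ) : ZMod 2) = ((2^ℓ : ℕ) : ZMod 2) := by rw [h]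
  rw [Nat.cast_add] at this
  have h2 : ((2^ℓ : ℕ) : ZMod 2) = 0 := by
    rw [show ℓ = (ℓ - 1) + 1 by omega, pow_succ, Nat.cast_mul,
      show ((2:ℕ) : ZMod 2) = 0 by decide, mul_zero]
  rw [h2] at this
  rw [ap, ← CharTwo.neg_eq (Avc n ℓ : ZMod 2)]
  linear_combination this

lemma mod_eq_iff_dvd_succ {n x : ℕ} (hn : 1 ≤ n) : x % (n+1) = n ↔ (n+1) ∣ (x + 1) := by
  have h2 : x % (n+1) < n + 1 := Nat.mod_lt _ (by omega)
  have hxmod : (x + 1) % (n+1) = (x % (n+1) + 1) % (n+1) := by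
    conv_lhs => rw [Nat.add_mod, Nat.mod_eq_of_lt (show 1 < n + 1 by omega)]
  constructor
  · intro h
    rw [Nat.dvd_iff_mod_eq_zero, hxmod, h, Nat.mod_self]
  · intro h
    rw [Nat.dvd_iff_mod_eq_zero, hxmod] at h
    by_contra hne
    rw [Nat.mod_eq_of_lt (by omega)] at h
    omega

lemma divisor_cond {m n : ℕ} (h1 : 1 ≤ n) (h2 : n ≤ m - 2) (hm : 3 ≤ m) :
    ((m - n - 1) % (n+1) = 0 ∨ (m - n - 1) % (n+1) = n) ↔ ((n+1) ∣ m ∨ (n+1) ∣ (m+1)) := by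
  have hmn : n + 1 ≤ m := by omega
  have e1 : (m - n - 1) % (n + 1) = m % (n + 1) := by
    rw [Nat.mod_eq_sub_mod hmn, show m - (n+1) = m - n - 1 by omega]
  rw [e1]
  apply or_congr
  · exact Nat.dvd_iff_mod_eq_zero.symm
  · exact mod_eq_iff_dvd_succ h1



lemma tau_parity {m : ℕ} (hm : 1 ≤ m) :
    ((m.divisors.card : ZMod 2)) = if IsSquare m then 1 else 0 := by
  classical
  have hm0 : m ≠ 0 := by omega
  have hcard : ((m.divisors.card : ZMod 2)) = ∑ _d ∈ m.divisors, (1 : ZMod 2) := by simp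
  rw [hcard, ← Finset.sum_filter_add_sum_filter_not m.divisors (fun d => m / d = d)]
  have hzero : (∑ _d ∈ m.divisors.filter (fun d => ¬ (m / d = d)), (1 : ZMod 2)) = 0 := by
    apply Finset.sum_involution (g := fun d _ => m / d)
    · intro a _; decide
    · intro a _ _; simp only [Finset.mem_filter] at *; tauto
    · intro a ha
      simp only [Finset.mem_filter, Nat.mem_divisors] at ha ⊢
      obtain ⟨⟨hdvd, _⟩, hne⟩ := ha
      refine ⟨⟨Nat.div_dvd_of_dvd hdvd, hm0⟩, ?_⟩
      rw [Nat.div_div_self hdvd hm0]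
      exact fun h => hne h.symm
    · intro a ha
      simp only [Finset.mem_filter, Nat.mem_divisors] at ha
      exact Nat.div_div_self ha.1.1 hm0
  rw [hzero, add_zero, Finset.sum_const, nsmul_eq_mul, mul_one]
  by_cases hsq : IsSquare m
  · rw [if_pos hsq]
    obtain ⟨k, hk⟩ := hsq
    have hk1 : 1 ≤ k := by nlinarith
    have : m.divisors.filter (fun d => m / d = d) = {k} := by
      ext d
      simp only [Finset.mem_filter, Nat.mem_divisors, Finset.mem_singleton]
      constructor
      · rintro ⟨⟨hdvd, _⟩, hdiv⟩
        have : d * d = m := by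
          conv_rhs => rw [Nat.eq_mul_of_div_eq_right hdvd hdiv]
        nlinarith [this, hk]
      · rintro rfl
        refine ⟨⟨⟨d, hk⟩, hm0⟩, ?_⟩
        rw [hk, Nat.mul_div_cancel_left d (by omega)]
    rw [this]
    simp
  · rw [if_neg hsq]
    have : m.divisors.filter (fun d => m / d = d) = ∅ := by
      ext d
      simp only [Finset.mem_filter, Nat.mem_divisors, Finset.notMem_empty, iff_false]
      rintro ⟨⟨hdvd, _⟩, hdiv⟩
      exact hsq ⟨d, (Nat.eq_mul_of_div_eq_right hdvd hdiv)⟩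
    rw [this]
    simp

lemma sum_dvd_full (M : ℕ) :
    (∑ d ∈ Finset.Icc 1 M, (if d ∣ M then (1:ZMod 2) else 0)) = (M.divisors.card : ZMod 2) := by
  classical
  rw [Finset.sum_boole]
  have hfe : Finset.filter (fun d => d ∣ M) (Finset.Icc 1 M) = M.divisors := by
    ext d
    simp only [Finset.mem_filter, Finset.mem_Icc, Nat.mem_divisors]
    constructor
    · rintro ⟨⟨h1, h2⟩, h3⟩
      exact ⟨h3, by omega⟩
    · rintro ⟨h1, h2⟩
      have := Nat.le_of_dvd (by omega) h1
      have := Nat.pos_of_dvd_of_pos h1 (by omega)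
      exact ⟨⟨by omega, by omega⟩, h1⟩
  rw [hfe]

lemma sum_Icc2_dvd_self {m : ℕ} (hm : 3 ≤ m) :
    (∑ d ∈ Finset.Icc 2 (m-1), (if d ∣ m then (1:ZMod 2) else 0)) = (m.divisors.card : ZMod 2) := by
  classical
  have h1 := sum_dvd_full m
  have hins : Finset.Icc 1 m = insert 1 (insert m (Finset.Icc 2 (m-1))) := by
    ext d
    simp only [Finset.mem_Icc, Finset.mem_insert]
    omega
  rw [hins, Finset.sum_insert (by simp only [Finset.mem_insert, Finset.mem_Icc]; omega),
      Finset.sum_insert (by simp only [Finset.mem_Icc]; omega),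
      if_pos (one_dvd m), if_pos dvd_rfl] at h1
  have h2 : (1:ZMod 2) + 1 = 0 := by decide
  linear_combination h1 - h2

lemma sum_Icc2_dvd_succ {m : ℕ} (hm : 3 ≤ m) :
    (∑ d ∈ Finset.Icc 2 (m-1), (if d ∣ (m+1) then (1:ZMod 2) else 0))
      = ((m+1).divisors.card : ZMod 2) := by
  classical
  have h1 := sum_dvd_full (m+1)
  have hins : Finset.Icc 1 (m+1) = insert 1 (insert m (insert (m+1) (Finset.Icc 2 (m-1)))) := by
    ext d
    simp only [Finset.mem_Icc, Finset.mem_insert]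
    omega
  rw [hins, Finset.sum_insert (by simp only [Finset.mem_insert, Finset.mem_Icc]; omega),
      Finset.sum_insert (by simp only [Finset.mem_insert, Finset.mem_Icc]; omega),
      Finset.sum_insert (by simp only [Finset.mem_Icc]; omega),
      if_pos (one_dvd _), if_pos dvd_rfl] at h1
  have hmnd : ¬ (m ∣ (m+1)) := by
    intro h
    have h2 := (Nat.dvd_add_right (dvd_refl m)).mp h
    have := Nat.le_of_dvd one_pos h2
    omega
  rw [if_neg hmnd] at h1
  have h2 : (1:ZMod 2) + 1 = 0 := by decide
  linear_combination h1 - h2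



lemma not_both_squares {m : ℕ} (hm : 3 ≤ m) : ¬ (IsSquare m ∧ IsSquare (m+1)) := by
  rintro ⟨⟨a, ha⟩, ⟨b, hb⟩⟩
  have ha2 : 2 ≤ a := by nlinarith
  have hba : a < b := by nlinarith
  have : a + 1 ≤ b := by omega
  nlinarith

lemma countFn_S_parity {m : ℕ} (hm : 3 ≤ m) :
    ((countFn {w : List (Fin 2) | ∃ (n : ℕ) (v₁ v₂ : List (Fin 2)), 1 ≤ n ∧
      w = List.replicate n 0 ++ [1] ++ v₁ ++ List.replicate n 0 ++ v₂} m : ZMod 2))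
      = if IsSquare m ∨ IsSquare (m+1) then 1 else 0 := by
  classical
  rw [countFn_S_eq, Nat.cast_sum]
  have hins : Finset.Icc 1 m = insert (m-1) (insert m (Finset.Icc 1 (m-2))) := by
    ext d
    simp only [Finset.mem_Icc, Finset.mem_insert]
    omega
  rw [hins, Finset.sum_insert (by simp only [Finset.mem_insert, Finset.mem_Icc]; omega),
      Finset.sum_insert (by simp only [Finset.mem_Icc]; omega),
      show m - (m-1) - 1 = 0 by omega, show m - m - 1 = 0 by omega,
      infc_zero_len (show 1 ≤ m - 1 by omega), infc_zero_len (show 1 ≤ m by omega)]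
  rw [Nat.cast_zero, zero_add, zero_add]
  have hterm : ∀ n ∈ Finset.Icc 1 (m-2), ((Infc n (m - n - 1) : ZMod 2))
      = (if (n+1) ∣ m then (1:ZMod 2) else 0) + (if (n+1) ∣ (m+1) then (1:ZMod 2) else 0) := by
    intro n hn
    simp only [Finset.mem_Icc] at hn
    rw [ip_eq_ap (by omega), ap_closed hn.1, if_congr (divisor_cond hn.1 hn.2 hm) rfl rfl]
    by_cases hA : (n+1) ∣ m <;> by_cases hB : (n+1) ∣ (m+1)
    · exfalso
      have h1 : (n+1) ∣ 1 := (Nat.dvd_add_right hA).mp hB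
      have := Nat.le_of_dvd one_pos h1
      omega
    · simp [hA, hB]
    · simp [hA, hB]
    · simp [hA, hB]
  rw [Finset.sum_congr rfl hterm, Finset.sum_add_distrib]
  have hr1 : (∑ n ∈ Finset.Icc 1 (m-2), (if (n+1) ∣ m then (1:ZMod 2) else 0))
      = ∑ d ∈ Finset.Icc 2 (m-1), (if d ∣ m then (1:ZMod 2) else 0) := by
    refine Finset.sum_nbij' (fun n => n + 1) (fun d => d - 1) ?_ ?_ ?_ ?_ ?_ <;>
      intro a ha <;> simp only [Finset.mem_Icc] at * <;> first | omega | rfl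
  have hr2 : (∑ n ∈ Finset.Icc 1 (m-2), (if (n+1) ∣ (m+1) then (1:ZMod 2) else 0))
      = ∑ d ∈ Finset.Icc 2 (m-1), (if d ∣ (m+1) then (1:ZMod 2) else 0) := by
    refine Finset.sum_nbij' (fun n => n + 1) (fun d => d - 1) ?_ ?_ ?_ ?_ ?_ <;>
      intro a ha <;> simp only [Finset.mem_Icc] at * <;> first | omega | rfl
  rw [hr1, hr2,
      sum_Icc2_dvd_self hm, sum_Icc2_dvd_succ hm,
      tau_parity (show 1 ≤ m by omega), tau_parity (show 1 ≤ m + 1 by omega)]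
  have hnb := not_both_squares hm
  by_cases hA : IsSquare m <;> by_cases hB : IsSquare (m+1)
  · exact absurd ⟨hA, hB⟩ hnb
  · simp [hA, hB]
  · simp [hA, hB]
  · simp [hA, hB]



lemma regular_eventually_periodic {β : Type} [Fintype β] (L' : Set (List β))
    (hreg : IsRegularLang L') :
    ∃ N p, 0 < p ∧ ∀ n, N ≤ n →
      ((countFn L' n : ZMod 2)) = ((countFn L' (n + p) : ZMod 2)) := by
  classical
  obtain ⟨σ, hfin, M, hM⟩ := hreg
  haveI := hfin
  set cnt : ℕ → σ → ℕ := fun n q => Set.ncard {w : List β | w.length = n ∧ M.eval w = q}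
    with hcnt
  -- counting via accepting states
  have hcount : ∀ n, countFn L' n = ∑ q ∈ Finset.univ.filter (· ∈ M.accept), cnt n q := by
    intro n
    rw [countFn]
    have hset : {w | w ∈ L' ∧ w.length = n}
        = ⋃ q ∈ Finset.univ.filter (· ∈ M.accept), {w : List β | w.length = n ∧ M.eval w = q} := by
      ext w
      simp only [Set.mem_setOf_eq, Set.mem_iUnion, Finset.mem_filter, Finset.mem_univ,
        true_and, exists_prop]
      constructor
      · rintro ⟨hw, hlen⟩
        exact ⟨M.eval w, (M.mem_accepts).1 ((hM w).2 hw), hlen, rfl⟩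
      · rintro ⟨q, hq, hlen, rfl⟩
        exact ⟨(hM w).1 ((M.mem_accepts).2 hq), hlen⟩
    rw [hset, ncard_biUnion]
    · exact fun q _ => (List.finite_length_eq β n).subset (fun w hw => hw.1)
    · intro i _ j _ hij
      rw [Set.disjoint_left]
      rintro w ⟨_, rfl⟩ ⟨_, h2⟩
      exact hij h2
  -- recurrence
  have hrec : ∀ n q, cnt (n+1) q
      = ∑ px ∈ Finset.univ.filter (fun px : σ × β => M.step px.1 px.2 = q), cnt n px.1 := by
    intro n q
    have hset : {w : List β | w.length = n + 1 ∧ M.eval w = q}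
        = ⋃ px ∈ Finset.univ.filter (fun px : σ × β => M.step px.1 px.2 = q),
            (fun w' => w' ++ [px.2]) '' {w' : List β | w'.length = n ∧ M.eval w' = px.1} := by
      ext w
      simp only [Set.mem_setOf_eq, Set.mem_iUnion, Finset.mem_filter, Finset.mem_univ,
        true_and, Set.mem_image, exists_prop]
      constructor
      · rintro ⟨hlen, rfl⟩
        have hne : w ≠ [] := by intro h; rw [h] at hlen; simp at hlen
        refine ⟨(M.eval w.dropLast, w.getLast hne), ?_, w.dropLast, ⟨?_, rfl⟩, ?_⟩
        · rw [← DFA.eval_append_singleton]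
          congr 1
          exact List.dropLast_append_getLast hne
        · rw [List.length_dropLast, hlen]
          omega
        · exact List.dropLast_append_getLast hne
      · rintro ⟨⟨p, x⟩, hstep, w', ⟨hlen, heval⟩, rfl⟩
        constructor
        · simp [hlen]
        · rw [DFA.eval_append_singleton, heval, hstep]
    rw [hcnt]
    simp only
    rw [hset, ncard_biUnion]
    · refine Finset.sum_congr rfl fun px _ => ?_
      exact Set.ncard_image_of_injective _ (fun a b hab => by simpa using hab)
    · exact fun px _ => ((List.finite_length_eq β n).subset (fun w hw => hw.1)).image _
    · intro i _ j _ hij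
      rw [Set.disjoint_left]
      rintro w ⟨x, hx, rfl⟩ ⟨y, hy, hxy⟩
      have h1 : y ++ [j.2] = x ++ [i.2] := hxy
      obtain ⟨hyx, hj⟩ := List.append_inj' h1 rfl
      apply hij
      have e2 : i.2 = j.2 := by simpa using hj.symm
      have e1 : i.1 = j.1 := by rw [← hx.2, ← hy.2, hyx]
      exact Prod.ext e1 e2
  -- iteration setup
  set v : ℕ → (σ → ZMod 2) := fun n q => ((cnt n q : ℕ) : ZMod 2) with hv
  set Φ : (σ → ZMod 2) → (σ → ZMod 2) := fun u q =>
    ∑ px ∈ Finset.univ.filter (fun px : σ × β => M.step px.1 px.2 = q), u px.1 with hΦ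
  have hstep : ∀ n, v (n + 1) = Φ (v n) := by
    intro n
    funext q
    rw [hv, hΦ]
    simp only
    rw [hrec n q, Nat.cast_sum]
  have hshift : ∀ k t, v (k + t) = Φ^[t] (v k) := by
    intro k t
    induction t with
    | zero => simp
    | succ t ih => rw [← Nat.add_assoc, hstep, ih, Function.iterate_succ_apply']
  obtain ⟨i, j, hij, hvij⟩ :=
    Finite.exists_ne_map_eq_of_infinite (fun n : ℕ => Φ^[n] (v 0))
  rcases Nat.lt_or_ge i j with hlt | hge
  case _ =>
    refine ⟨i, j - i, by omega, fun n hn => ?_⟩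
    have hvn : ∀ m', v m' = Φ^[m'] (v 0) := fun m' => by
      have := hshift 0 m'
      rwa [Nat.zero_add] at this
    have hvi : v i = v j := by rw [hvn i, hvn j]; exact hvij
    have h1 : v (n + (j - i)) = v n := by
      have e1 : n + (j - i) = (i + (j - i)) + (n - i) := by omega
      have e2 : n = i + (n - i) := by omega
      calc v (n + (j - i)) = Φ^[n - i] (v (i + (j - i))) := by rw [e1, hshift]
        _ = Φ^[n - i] (v i) := by rw [show i + (j - i) = j by omega, ← hvi]
        _ = v n := by rw [← hshift, ← e2]
    have h2 : ∀ m', (countFn L' m' : ZMod 2) = ∑ q ∈ Finset.univ.filter (· ∈ M.accept), v m' q := by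
      intro m'
      rw [hcount m', Nat.cast_sum]
    rw [h2, h2, h1]
  case _ =>
    have hlt : j < i := by omega
    refine ⟨j, i - j, by omega, fun n hn => ?_⟩
    have hvn : ∀ m', v m' = Φ^[m'] (v 0) := fun m' => by
      have := hshift 0 m'
      rwa [Nat.zero_add] at this
    have hvi : v j = v i := by rw [hvn j, hvn i]; exact hvij.symm
    have h1 : v (n + (i - j)) = v n := by
      have e1 : n + (i - j) = (j + (i - j)) + (n - j) := by omega
      have e2 : n = j + (n - j) := by omega
      calc v (n + (i - j)) = Φ^[n - j] (v (j + (i - j))) := by rw [e1, hshift]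
        _ = Φ^[n - j] (v j) := by rw [show j + (i - j) = i by omega, ← hvi]
        _ = v n := by rw [← hshift, ← e2]
    have h2 : ∀ m', (countFn L' m' : ZMod 2) = ∑ q ∈ Finset.univ.filter (· ∈ M.accept), v m' q := by
      intro m'
      rw [hcount m', Nat.cast_sum]
    rw [h2, h2, h1]


lemma not_square_between {k x : ℕ} (h1 : k * k < x) (h2 : x < (k+1) * (k+1)) :
    ¬ IsSquare x := by
  rintro ⟨a, rfl⟩
  rcases Nat.lt_or_ge a (k+1) with h | h
  · have : a ≤ k := by omega
    nlinarith
  · nlinarith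

end CRAux

open CRAux in
/-- The language `S = {a^n b v₁ a^n v₂ : n ≥ 1, v₁, v₂ ∈ {a,b}*}` (with `a = 0`, `b = 1`)
is not counting-regular. -/
theorem stmt2 :
    ¬ CountingRegular {w : List (Fin 2) | ∃ (n : ℕ) (v₁ v₂ : List (Fin 2)), 1 ≤ n ∧
      w = List.replicate n 0 ++ [1] ++ v₁ ++ List.replicate n 0 ++ v₂} := by
  rintro ⟨β, hβ, L', hreg, hcnt⟩
  haveI := hβ
  obtain ⟨N, p, hp, hper⟩ := regular_eventually_periodic L' hreg
  set k := N + p + 3 with hk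
  set m := k * k with hm
  have hk3 : 3 ≤ k := by omega
  have hkk : k ≤ k * k := Nat.le_mul_of_pos_left k (by omega)
  have hmN : N ≤ m := by omega
  have hm3 : 3 ≤ m := by omega
  have hsqexp : (k+1) * (k+1) = k * k + 2 * k + 1 := by ring
  have hub : m + p + 1 < (k+1) * (k+1) := by omega
  have h1 := hper m hmN
  rw [hcnt m, hcnt (m + p)] at h1
  rw [countFn_S_parity hm3, countFn_S_parity (by omega)] at h1
  have hsq : IsSquare m := ⟨k, hm⟩
  have hns1 : ¬ IsSquare (m + p) :=
    not_square_between (k := k) (by omega) (by omega)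
  have hns2 : ¬ IsSquare (m + p + 1) :=
    not_square_between (k := k) (by omega) hub
  rw [if_pos (Or.inl hsq), if_neg (by push_neg; exact ⟨hns1, hns2⟩)] at h1
  exact absurd h1 (by decide)
end

section
/- If L ⊆ Σ+ is counting-regular and L is a code, then the Kleene star L* is counting-regular. -/
namespace Stmt10Aux

variable {β : Type} {σ : Type}

/-- Mark a word: tag the first letter `true`, the rest `false`. -/
def mark : List β → List (β × Bool)
  | [] => []
  | a :: t => (a, true) :: t.map (fun b => (b, false))

@[simp] lemma mark_nil : (mark ([] : List β)) = [] := rfl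

@[simp] lemma mark_cons (a : β) (t : List β) :
    mark (a :: t) = (a, true) :: t.map (fun b => (b, false)) := rfl

@[simp] lemma mark_length (u : List β) : (mark u).length = u.length := by
  cases u <;> simp [mark]

lemma mark_inj : Function.Injective (mark (β := β)) := by
  intro u v h
  have hu : (mark u).map Prod.fst = u := by
    cases u <;> simp [mark, List.map_map, Function.comp_def]
  have hv : (mark v).map Prod.fst = v := by
    cases v <;> simp [mark, List.map_map, Function.comp_def]
  rw [← hu, ← hv, h]

/-- The marked flatten of a list of blocks. -/
def mflat (ls : List (List β)) : List (β × Bool) := (ls.map mark).flatten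

@[simp] lemma mflat_nil : mflat ([] : List (List β)) = [] := rfl

@[simp] lemma mflat_cons (u : List β) (ls : List (List β)) :
    mflat (u :: ls) = mark u ++ mflat ls := rfl

lemma mflat_length (ls : List (List β)) :
    (mflat ls).length = (ls.map List.length).sum := by
  induction ls with
  | nil => rfl
  | cons u ls ih => simp [mflat, ih, Function.comp_def]

/-- head of a marked flatten of nonempty blocks is tagged `true` (or the list is empty) -/
lemma mflat_head (ls : List (List β)) (h : ∀ x ∈ ls, x ≠ []) :
    mflat ls = [] ∨ ∃ b r, mflat ls = (b, true) :: r := by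
  cases ls with
  | nil => exact Or.inl rfl
  | cons u ls =>
    cases u with
    | nil => exact absurd rfl (h [] (by simp))
    | cons a t => exact Or.inr ⟨a, t.map (fun b => (b, false)) ++ mflat ls, rfl⟩

lemma false_run_cancel (t1 t2 : List β) (a b : List (β × Bool))
    (ha : a = [] ∨ ∃ x r, a = (x, true) :: r) (hb : b = [] ∨ ∃ x r, b = (x, true) :: r)
    (h : t1.map (fun x => (x, false)) ++ a = t2.map (fun x => (x, false)) ++ b) :
    t1 = t2 ∧ a = b := by
  induction t1 generalizing t2 with
  | nil =>
    cases t2 with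
    | nil => simpa using h
    | cons z t2 =>
      simp only [List.map_nil, List.nil_append, List.map_cons, List.cons_append] at h
      rcases ha with rfl | ⟨x, r, rfl⟩
      · simp at h
      · simp at h
  | cons w t1 ih =>
    cases t2 with
    | nil =>
      simp only [List.map_nil, List.nil_append, List.map_cons, List.cons_append] at h
      rcases hb with rfl | ⟨x, r, rfl⟩
      · simp at h
      · simp at h
    | cons z t2 =>
      simp only [List.map_cons, List.cons_append, List.cons.injEq, Prod.mk.injEq] at h
      obtain ⟨⟨rfl, -⟩, h2⟩ := h
      obtain ⟨h3, h4⟩ := ih t2 h2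
      exact ⟨by rw [h3], h4⟩

lemma mflat_inj (ls1 ls2 : List (List β)) (h1 : ∀ x ∈ ls1, x ≠ []) (h2 : ∀ x ∈ ls2, x ≠ [])
    (h : mflat ls1 = mflat ls2) : ls1 = ls2 := by
  induction ls1 generalizing ls2 with
  | nil =>
    cases ls2 with
    | nil => rfl
    | cons v ls2 =>
      cases v with
      | nil => exact absurd rfl (h2 [] (by simp))
      | cons c t => simp [mflat] at h
  | cons u ls1 ih =>
    cases ls2 with
    | nil =>
      cases u with
      | nil => exact absurd rfl (h1 [] (by simp))
      | cons a t => simp [mflat] at h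
    | cons v ls2 =>
      cases u with
      | nil => exact absurd rfl (h1 [] (by simp))
      | cons a t1 =>
        cases v with
        | nil => exact absurd rfl (h2 [] (by simp))
        | cons c t2 =>
          simp only [mflat_cons, mark_cons, List.cons_append, List.cons.injEq,
            Prod.mk.injEq] at h
          obtain ⟨⟨rfl, -⟩, hr⟩ := h
          obtain ⟨ht, hrest⟩ := false_run_cancel t1 t2 _ _
            (mflat_head ls1 (fun x hx => h1 x (by simp [hx])))
            (mflat_head ls2 (fun x hx => h2 x (by simp [hx]))) hr
          rw [ht, ih ls2 (fun x hx => h1 x (by simp [hx]))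
            (fun x hx => h2 x (by simp [hx])) hrest]


open Classical in
/-- DFA accepting the marked star of `M.accepts`. -/
noncomputable def starDFA (M : DFA β σ) : DFA (β × Bool) (Option (Option σ)) where
  step s c :=
    match s, c with
    | none, _ => none
    | some none, (b, true) => some (some (M.step M.start b))
    | some none, (_, false) => none
    | some (some q), (b, false) => some (some (M.step q b))
    | some (some q), (b, true) =>
        if q ∈ M.accept then some (some (M.step M.start b)) else none
  start := some none
  accept := {some none} ∪ {s | ∃ q ∈ M.accept, s = some (some q)}

variable (M : DFA β σ)

lemma starDFA_evalFrom_none (w : List (β × Bool)) :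
    (starDFA M).evalFrom none w = none := by
  induction w with
  | nil => rfl
  | cons c w ih => exact ih

lemma none_not_accept : none ∉ (starDFA M).accept := by
  intro h
  rcases h with h | ⟨q, -, h⟩ <;> simp [starDFA] at h

lemma starDFA_false_run (q : σ) (t : List β) (rest : List (β × Bool)) :
    (starDFA M).evalFrom (some (some q)) (t.map (fun b => (b, false)) ++ rest) =
      (starDFA M).evalFrom (some (some (M.evalFrom q t))) rest := by
  induction t generalizing q with
  | nil => rfl
  | cons a t ih =>
    simp only [List.map_cons, List.cons_append]
    exact ih (M.step q a)

lemma starDFA_accept_of_blocks (ls : List (List β)) (q : σ) (hq : q ∈ M.accept)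
    (hls : ∀ x ∈ ls, x ∈ M.accepts) (hne : ∀ x ∈ ls, x ≠ []) :
    (starDFA M).evalFrom (some (some q)) (mflat ls) ∈ (starDFA M).accept := by
  induction ls generalizing q with
  | nil => exact Or.inr ⟨q, hq, rfl⟩
  | cons u ls ih =>
    cases u with
    | nil => exact absurd rfl (hne [] (by simp))
    | cons a t =>
      have hstep : (starDFA M).step (some (some q)) (a, true) =
          some (some (M.step M.start a)) := by simp [starDFA, hq]
      have h1 : (starDFA M).evalFrom (some (some q)) (mflat ((a :: t) :: ls)) =
          (starDFA M).evalFrom (some (some (M.step M.start a)))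
            (t.map (fun b => (b, false)) ++ mflat ls) := by
        rw [mflat_cons, mark_cons, List.cons_append, DFA.evalFrom, List.foldl_cons, hstep]; rfl
      rw [h1, starDFA_false_run]
      have hu : M.evalFrom (M.step M.start a) t ∈ M.accept := by
        have := hls (a :: t) (by simp)
        rwa [DFA.mem_accepts] at this
      exact ih _ hu (fun x hx => hls x (by simp [hx])) (fun x hx => hne x (by simp [hx]))

lemma starDFA_decomp (v : List (β × Bool)) (q : σ)
    (h : (starDFA M).evalFrom (some (some q)) v ∈ (starDFA M).accept) :
    ∃ (t : List β) (ls : List (List β)),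
      v = t.map (fun b => (b, false)) ++ mflat ls ∧ M.evalFrom q t ∈ M.accept ∧
        ∀ x ∈ ls, x ∈ M.accepts := by
  induction v generalizing q with
  | nil =>
    rcases h with h | ⟨q', hq', h⟩
    · simp at h
    · simp only [DFA.evalFrom_nil] at h
      obtain rfl : q = q' := by simpa using h
      exact ⟨[], [], by simp, hq', by simp⟩
  | cons c v ih =>
    obtain ⟨b, tg⟩ := c
    cases tg with
    | false =>
      have hstep : (starDFA M).step (some (some q)) (b, false) = some (some (M.step q b)) := rfl
      rw [DFA.evalFrom, List.foldl_cons, hstep] at h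
      obtain ⟨t, ls, hv, hacc, hmem⟩ := ih (M.step q b) h
      exact ⟨b :: t, ls, by simp [hv], hacc, hmem⟩
    | true =>
      by_cases hq : q ∈ M.accept
      · have hstep : (starDFA M).step (some (some q)) (b, true) =
            some (some (M.step M.start b)) := by simp [starDFA, hq]
        rw [DFA.evalFrom, List.foldl_cons, hstep] at h
        obtain ⟨t, ls, hv, hacc, hmem⟩ := ih (M.step M.start b) h
        refine ⟨[], (b :: t) :: ls, ?_, by simpa using hq, ?_⟩
        · simp [mflat, hv]
        · intro x hx
          rcases (by simpa using hx : x = b :: t ∨ x ∈ ls) with rfl | hx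
          · rw [DFA.mem_accepts]; exact hacc
          · exact hmem x hx
      · have hstep : (starDFA M).step (some (some q)) (b, true) = none := by
          simp [starDFA, hq]
        rw [DFA.evalFrom, List.foldl_cons, hstep] at h
        rw [show List.foldl (starDFA M).step none v = (starDFA M).evalFrom none v from rfl,
          starDFA_evalFrom_none] at h
        exact absurd h (none_not_accept M)

lemma starDFA_accepts (hnil : [] ∉ M.accepts) (w : List (β × Bool)) :
    w ∈ (starDFA M).accepts ↔
      ∃ ls : List (List β), (∀ x ∈ ls, x ∈ M.accepts) ∧ w = mflat ls := by
  constructor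
  · intro h
    rw [DFA.mem_accepts] at h
    cases w with
    | nil => exact ⟨[], by simp, rfl⟩
    | cons c v =>
      obtain ⟨b, tg⟩ := c
      cases tg with
      | false =>
        have hstep : (starDFA M).step (some none) (b, false) = none := rfl
        rw [DFA.eval, DFA.evalFrom, List.foldl_cons] at h
        rw [show (starDFA M).start = some none from rfl, hstep] at h
        rw [show List.foldl (starDFA M).step none v = (starDFA M).evalFrom none v from rfl,
          starDFA_evalFrom_none] at h
        exact absurd h (none_not_accept M)
      | true =>
        have hstep : (starDFA M).step (some none) (b, true) =
          some (some (M.step M.start b)) := rfl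
        rw [DFA.eval, DFA.evalFrom, List.foldl_cons] at h
        rw [show (starDFA M).start = some none from rfl, hstep] at h
        obtain ⟨t, ls, hv, hacc, hmem⟩ := starDFA_decomp M v (M.step M.start b) h
        refine ⟨(b :: t) :: ls, ?_, by simp [mflat, hv]⟩
        intro x hx
        rcases (by simpa using hx : x = b :: t ∨ x ∈ ls) with rfl | hx
        · rw [DFA.mem_accepts]; exact hacc
        · exact hmem x hx
  · rintro ⟨ls, hls, rfl⟩
    rw [DFA.mem_accepts]
    have hne : ∀ x ∈ ls, x ≠ [] := by
      intro x hx hxe; exact hnil (hxe ▸ hls x hx)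
    cases ls with
    | nil => exact Or.inl rfl
    | cons u ls =>
      cases u with
      | nil => exact absurd rfl (hne [] (by simp))
      | cons a t =>
        have h1 : (starDFA M).eval (mflat ((a :: t) :: ls)) =
            (starDFA M).evalFrom (some (some (M.step M.start a)))
              (t.map (fun b => (b, false)) ++ mflat ls) := rfl
        rw [h1, starDFA_false_run]
        have hu : M.evalFrom (M.step M.start a) t ∈ M.accept := by
          have := hls (a :: t) (by simp); rwa [DFA.mem_accepts] at this
        exact starDFA_accept_of_blocks M ls _ hu
          (fun x hx => hls x (by simp [hx])) (fun x hx => hne x (by simp [hx]))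


section blockMap

variable {β₁ β₂ : Type} (L₁ : Set (List β₁)) (L₂ : Set (List β₂))

open Classical in
/-- Transport a word of `L₁` to a word of `L₂` of the same length. -/
noncomputable def blockMap
    (e : ∀ m, {w : List β₁ // w ∈ L₁ ∧ w.length = m} → {w : List β₂ // w ∈ L₂ ∧ w.length = m}) :
    List β₁ → List β₂ :=
  fun u => if h : u ∈ L₁ then (e u.length ⟨u, h, rfl⟩).1 else []

lemma blockMap_eval
    (e : ∀ m, {w : List β₁ // w ∈ L₁ ∧ w.length = m} → {w : List β₂ // w ∈ L₂ ∧ w.length = m})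
    (v : List β₁) (hv : v ∈ L₁) (m : ℕ) (hm : v.length = m) :
    blockMap L₁ L₂ e v = (e m ⟨v, hv, hm⟩).1 := by
  subst hm
  simp [blockMap, dif_pos hv]

lemma blockMap_mem
    (e : ∀ m, {w : List β₁ // w ∈ L₁ ∧ w.length = m} → {w : List β₂ // w ∈ L₂ ∧ w.length = m})
    (u : List β₁) (hu : u ∈ L₁) : blockMap L₁ L₂ e u ∈ L₂ := by
  rw [blockMap_eval L₁ L₂ e u hu u.length rfl]
  exact (e u.length ⟨u, hu, rfl⟩).2.1

lemma blockMap_len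
    (e : ∀ m, {w : List β₁ // w ∈ L₁ ∧ w.length = m} → {w : List β₂ // w ∈ L₂ ∧ w.length = m})
    (u : List β₁) (hu : u ∈ L₁) : (blockMap L₁ L₂ e u).length = u.length := by
  rw [blockMap_eval L₁ L₂ e u hu u.length rfl]
  exact (e u.length ⟨u, hu, rfl⟩).2.2

lemma blockMap_roundtrip
    (E : ∀ m, {w : List β₁ // w ∈ L₁ ∧ w.length = m} ≃ {w : List β₂ // w ∈ L₂ ∧ w.length = m})
    (u : List β₁) (hu : u ∈ L₁) :
    blockMap L₂ L₁ (fun m x => (E m).symm x) (blockMap L₁ L₂ (fun m x => E m x) u) = u := by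
  have hv : blockMap L₁ L₂ (fun m x => E m x) u ∈ L₂ := blockMap_mem L₁ L₂ _ u hu
  have hm : (blockMap L₁ L₂ (fun m x => E m x) u).length = u.length :=
    blockMap_len L₁ L₂ _ u hu
  rw [blockMap_eval L₂ L₁ _ _ hv u.length hm]
  have h2 : (⟨blockMap L₁ L₂ (fun m x => E m x) u, hv, hm⟩ :
      {w : List β₂ // w ∈ L₂ ∧ w.length = u.length}) = E u.length ⟨u, hu, rfl⟩ := by
    apply Subtype.ext
    exact blockMap_eval L₁ L₂ (fun m x => E m x) u hu u.length rfl
  rw [h2, Equiv.symm_apply_apply]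

end blockMap

end Stmt10Aux

open Stmt10Aux


/-- If `L ⊆ Σ⁺` is a counting-regular code, then `L*` is counting-regular. -/
theorem stmt10 {α : Type} [Fintype α] (L : Set (List α))
    (hne : ∀ w ∈ L, w ≠ [])
    (hcode : ∀ xs ys : List (List α), (∀ x ∈ xs, x ∈ L) → (∀ y ∈ ys, y ∈ L) →
      xs.flatten = ys.flatten → xs = ys)
    (hcr : CountingRegular L) :
    CountingRegular {w | ∃ xs : List (List α), (∀ x ∈ xs, x ∈ L) ∧ w = xs.flatten} := by
  classical
  obtain ⟨β, hβ, L', ⟨σ, hσ, M, hM⟩, hcount⟩ := hcr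
  haveI := hβ
  haveI := hσ
  have hLnil : countFn L 0 = 0 := by
    have hempty : {w | w ∈ L ∧ w.length = 0} = ∅ := by
      ext w
      simp only [Set.mem_setOf_eq, Set.mem_empty_iff_false, iff_false, not_and]
      intro hw hl
      exact hne w hw (List.length_eq_zero_iff.mp hl)
    rw [countFn, hempty, Set.ncard_empty]
  have hfin' : ∀ m : ℕ, ({w : List β | w ∈ L' ∧ w.length = m}).Finite :=
    fun m => (List.finite_length_eq β m).subset fun w hw => hw.2
  have hfin : ∀ m : ℕ, ({w : List α | w ∈ L ∧ w.length = m}).Finite :=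
    fun m => (List.finite_length_eq α m).subset fun w hw => hw.2
  have hnilL' : ([] : List β) ∉ L' := by
    intro h
    have h0 : countFn L' 0 = 0 := by rw [hcount 0, hLnil]
    rw [countFn, Set.ncard_eq_zero (hfin' 0)] at h0
    have hmem : ([] : List β) ∈ {w : List β | w ∈ L' ∧ w.length = 0} := ⟨h, rfl⟩
    rw [h0] at hmem
    exact hmem
  have hnilM : ([] : List β) ∉ M.accepts := fun h => hnilL' ((hM []).mp h)
  have hEx : ∀ m : ℕ, Nonempty
      ({w : List β // w ∈ L' ∧ w.length = m} ≃ {w : List α // w ∈ L ∧ w.length = m}) := by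
    intro m
    haveI : Finite {w : List β // w ∈ L' ∧ w.length = m} := (hfin' m).to_subtype
    haveI : Finite {w : List α // w ∈ L ∧ w.length = m} := (hfin m).to_subtype
    apply Finite.card_eq.mp
    have h := hcount m
    rw [countFn, countFn, ← Nat.card_coe_set_eq, ← Nat.card_coe_set_eq] at h
    exact h
  have E := fun m => (hEx m).some
  set f := blockMap L' L (fun m x => E m x) with hfdef
  set g := blockMap L L' (fun m x => (E m).symm x) with hgdef
  have hfmem : ∀ u ∈ L', f u ∈ L := fun u hu => blockMap_mem L' L _ u hu
  have hflen : ∀ u ∈ L', (f u).length = u.length := fun u hu => blockMap_len L' L _ u hu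
  have hgmem : ∀ v ∈ L, g v ∈ L' := fun v hv => blockMap_mem L L' _ v hv
  have hgf : ∀ u ∈ L', g (f u) = u := fun u hu => blockMap_roundtrip L' L E u hu
  have hfg : ∀ v ∈ L, f (g v) = v := by
    intro v hv
    have h := blockMap_roundtrip L L' (fun m => (E m).symm) v hv
    simpa using h
  refine ⟨β × Bool, inferInstance,
    {w | ∃ ls : List (List β), (∀ x ∈ ls, x ∈ L') ∧ w = mflat ls},
    ⟨Option (Option σ), inferInstance, Stmt10Aux.starDFA M, ?_⟩, ?_⟩
  · intro w
    rw [starDFA_accepts M hnilM w]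
    constructor
    · rintro ⟨ls, h1, rfl⟩
      exact ⟨ls, fun x hx => (hM x).mp (h1 x hx), rfl⟩
    · rintro ⟨ls, h1, rfl⟩
      exact ⟨ls, fun x hx => (hM x).mpr (h1 x hx), rfl⟩
  · intro n
    have hneL' : ∀ (ls : List (List β)), (∀ x ∈ ls, x ∈ L') → ∀ x ∈ ls, x ≠ [] := by
      intro ls h x hx hxe
      exact hnilL' (hxe ▸ h x hx)
    -- Equiv between block lists and words of the marked star
    have EA : {ls : List (List β) // (∀ x ∈ ls, x ∈ L') ∧ (ls.map List.length).sum = n} ≃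
        {w : List (β × Bool) //
          w ∈ {w | ∃ ls : List (List β), (∀ x ∈ ls, x ∈ L') ∧ w = mflat ls} ∧ w.length = n} := by
      refine Equiv.ofBijective
        (fun p => ⟨mflat p.1, ⟨p.1, p.2.1, rfl⟩, by rw [mflat_length]; exact p.2.2⟩) ⟨?_, ?_⟩
      · rintro ⟨ls1, h1, hs1⟩ ⟨ls2, h2, hs2⟩ h
        have := congrArg Subtype.val h
        exact Subtype.ext (mflat_inj ls1 ls2 (hneL' ls1 h1) (hneL' ls2 h2) this)
      · rintro ⟨w, ⟨ls, h1, rfl⟩, hlen⟩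
        exact ⟨⟨ls, h1, by rw [← mflat_length]; exact hlen⟩, rfl⟩
    -- Equiv between block lists and words of the star of L
    have EB : {ls : List (List α) // (∀ x ∈ ls, x ∈ L) ∧ (ls.map List.length).sum = n} ≃
        {w : List α //
          w ∈ {w | ∃ xs : List (List α), (∀ x ∈ xs, x ∈ L) ∧ w = xs.flatten} ∧
            w.length = n} := by
      refine Equiv.ofBijective
        (fun p => ⟨p.1.flatten, ⟨p.1, p.2.1, rfl⟩, by rw [List.length_flatten]; exact p.2.2⟩)
        ⟨?_, ?_⟩
      · rintro ⟨ls1, h1, hs1⟩ ⟨ls2, h2, hs2⟩ h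
        have := congrArg Subtype.val h
        exact Subtype.ext (hcode ls1 ls2 h1 h2 this)
      · rintro ⟨w, ⟨ls, h1, rfl⟩, hlen⟩
        exact ⟨⟨ls, h1, by rw [← List.length_flatten]; exact hlen⟩, rfl⟩
    -- Equiv between the two kinds of block lists
    have ET : {ls : List (List β) // (∀ x ∈ ls, x ∈ L') ∧ (ls.map List.length).sum = n} ≃
        {ls : List (List α) // (∀ x ∈ ls, x ∈ L) ∧ (ls.map List.length).sum = n} := by
      refine
        { toFun := fun p => ⟨p.1.map f, ?_, ?_⟩
          invFun := fun p => ⟨p.1.map g, ?_, ?_⟩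
          left_inv := ?_
          right_inv := ?_ }
      · intro x hx
        obtain ⟨u, hu, rfl⟩ := List.mem_map.mp hx
        exact hfmem u (p.2.1 u hu)
      · rw [List.map_map]
        rw [List.map_congr_left (fun u hu => by
          show (List.length ∘ f) u = List.length u
          exact hflen u (p.2.1 u hu))]
        exact p.2.2
      · intro x hx
        obtain ⟨u, hu, rfl⟩ := List.mem_map.mp hx
        exact hgmem u (p.2.1 u hu)
      · rw [List.map_map]
        rw [List.map_congr_left (fun u hu => by
          show (List.length ∘ g) u = List.length u
          exact blockMap_len L L' _ u (p.2.1 u hu))]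
        exact p.2.2
      · rintro ⟨ls, h1, h2⟩
        apply Subtype.ext
        show (ls.map f).map g = ls
        rw [List.map_map]
        rw [List.map_congr_left (fun u hu => by
          show (g ∘ f) u = u
          exact hgf u (h1 u hu))]
        exact List.map_id ls
      · rintro ⟨ls, h1, h2⟩
        apply Subtype.ext
        show (ls.map g).map f = ls
        rw [List.map_map]
        rw [List.map_congr_left (fun u hu => by
          show (f ∘ g) u = u
          exact hfg u (h1 u hu))]
        exact List.map_id ls
    calc countFn {w | ∃ ls : List (List β), (∀ x ∈ ls, x ∈ L') ∧ w = mflat ls} n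
        = Nat.card {w : List (β × Bool) //
            w ∈ {w | ∃ ls : List (List β), (∀ x ∈ ls, x ∈ L') ∧ w = mflat ls} ∧
              w.length = n} := (Nat.card_coe_set_eq _).symm
      _ = Nat.card {w : List α //
            w ∈ {w | ∃ xs : List (List α), (∀ x ∈ xs, x ∈ L) ∧ w = xs.flatten} ∧
              w.length = n} := Nat.card_congr ((EA.symm.trans ET).trans EB)
      _ = countFn {w | ∃ xs : List (List α), (∀ x ∈ xs, x ∈ L) ∧ w = xs.flatten} n :=
          Nat.card_coe_set_eq _
end

section
/- Let L₁, L₂ be counting-regular languages over a finite alphabet Σ. If L₁ is a prefix code or L₂ is a suffix code, then the concatenation L₁L₂ is counting-regular. -/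
/-- A language of nonempty words is a prefix code if no word is a proper prefix of another,
i.e. `L ∩ LΣ⁺ = ∅`. -/
def IsPrefixCode {α : Type*} (L : Set (List α)) : Prop :=
  [] ∉ L ∧ ∀ u ∈ L, ∀ v ∈ L, u <+: v → u = v

/-- A language of nonempty words is a suffix code if no word is a proper suffix of another,
i.e. `L ∩ Σ⁺L = ∅`. -/
def IsSuffixCode {α : Type*} (L : Set (List α)) : Prop :=
  [] ∉ L ∧ ∀ u ∈ L, ∀ v ∈ L, u <:+ v → u = v

/-! ### Auxiliary material -/

section Counting

lemma countFn_set_finite {γ : Type*} [Finite γ] (L : Set (List γ)) (n : ℕ) :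
    {w | w ∈ L ∧ w.length = n}.Finite :=
  (List.finite_length_eq γ n).subset fun _ hx => hx.2

/-- Convolution formula for the counting function of an unambiguous concatenation. -/
lemma countFn_concat {γ : Type*} [Finite γ] (A B : Set (List γ))
    (hinj : ∀ u ∈ A, ∀ v ∈ B, ∀ u' ∈ A, ∀ v' ∈ B, u ++ v = u' ++ v' → u = u' ∧ v = v')
    (n : ℕ) :
    countFn {w | ∃ u ∈ A, ∃ v ∈ B, w = u ++ v} n
      = ∑ k ∈ Finset.range (n + 1), countFn A k * countFn B (n - k) := by
  classical
  haveI iA : ∀ k : ℕ, Fintype ↥{u : List γ | u ∈ A ∧ u.length = k} :=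
    fun k => (countFn_set_finite A k).fintype
  haveI iB : ∀ k : ℕ, Fintype ↥{v : List γ | v ∈ B ∧ v.length = k} :=
    fun k => (countFn_set_finite B k).fintype
  set S : Set (List γ) := {w | (∃ u ∈ A, ∃ v ∈ B, w = u ++ v) ∧ w.length = n} with hSdef
  let f : (Σ k : Fin (n + 1),
      ↥{u : List γ | u ∈ A ∧ u.length = (k : ℕ)} ×
      ↥{v : List γ | v ∈ B ∧ v.length = n - (k : ℕ)}) → ↥S := fun p =>
    ⟨p.2.1.1 ++ p.2.2.1, ⟨p.2.1.1, p.2.1.2.1, p.2.2.1, p.2.2.2.1, rfl⟩, by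
      have h1 := p.2.1.2.2
      have h2 := p.2.2.2.2
      have h3 := p.1.isLt
      simp only [List.length_append, h1, h2]
      omega⟩
  have hf : Function.Bijective f := by
    constructor
    · rintro ⟨k, u, v⟩ ⟨k', u', v'⟩ h
      have h' : u.1 ++ v.1 = u'.1 ++ v'.1 := congrArg Subtype.val h
      obtain ⟨h1, h2⟩ := hinj _ u.2.1 _ v.2.1 _ u'.2.1 _ v'.2.1 h'
      have hk : k = k' := Fin.val_injective (by rw [← u.2.2, ← u'.2.2, h1])
      subst hk
      obtain rfl : u = u' := Subtype.ext h1
      obtain rfl : v = v' := Subtype.ext h2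
      rfl
    · rintro ⟨w, ⟨u, hu, v, hv, rfl⟩, hlen⟩
      have hlen' : u.length + v.length = n := by simpa [List.length_append] using hlen
      refine ⟨⟨⟨u.length, by omega⟩, ⟨u, hu, rfl⟩, ⟨v, hv, ?_⟩⟩, rfl⟩
      simp only
      omega
  calc countFn {w | ∃ u ∈ A, ∃ v ∈ B, w = u ++ v} n
      = Nat.card ↥S := (Nat.card_coe_set_eq S).symm
    _ = ∑ k : Fin (n + 1), countFn A (k : ℕ) * countFn B (n - (k : ℕ)) := by
        rw [← Nat.card_eq_of_bijective f hf, Nat.card_eq_fintype_card, Fintype.card_sigma]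
        refine Finset.sum_congr rfl fun k _ => ?_
        rw [Fintype.card_prod, ← Nat.card_eq_fintype_card, ← Nat.card_eq_fintype_card,
          Nat.card_coe_set_eq, Nat.card_coe_set_eq]
        rfl
    _ = ∑ k ∈ Finset.range (n + 1), countFn A k * countFn B (n - k) :=
        Fin.sum_univ_eq_sum_range (fun k => countFn A k * countFn B (n - k)) (n + 1)

lemma countFn_map_image {γ δ : Type*} (g : γ → δ) (hg : Function.Injective g)
    (L : Set (List γ)) (n : ℕ) :
    countFn (List.map g '' L) n = countFn L n := by
  have hset : {w | w ∈ List.map g '' L ∧ w.length = n}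
      = List.map g '' {u | u ∈ L ∧ u.length = n} := by
    ext w
    constructor
    · rintro ⟨⟨u, hu, rfl⟩, hlen⟩
      exact ⟨u, ⟨hu, by simpa using hlen⟩, rfl⟩
    · rintro ⟨u, ⟨hu, hlen⟩, rfl⟩
      exact ⟨⟨u, hu, rfl⟩, by simpa⟩
  rw [countFn, hset, Set.ncard_image_of_injective _ (List.map_injective_iff.2 hg)]
  rfl

/-- Unique factorization of words over a disjoint union of alphabets. -/
lemma disjoint_append_inj {β₁ β₂ : Type*} :
    ∀ (a a' : List β₁) (b b' : List β₂),
      (a.map Sum.inl ++ b.map Sum.inr : List (β₁ ⊕ β₂)) = a'.map Sum.inl ++ b'.map Sum.inr →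
      a = a' ∧ b = b'
  | [], [], b, b' => fun h =>
      ⟨rfl, List.map_injective_iff.2 Sum.inr_injective (by simpa using h)⟩
  | [], _ :: _, b, b' => fun h => by cases b <;> simp at h
  | _ :: _, [], b, b' => fun h => by cases b' <;> simp at h
  | x :: a, x' :: a', b, b' => fun h => by
      simp only [List.map_cons, List.cons_append, List.cons.injEq, Sum.inl.injEq] at h
      obtain ⟨h1, h2⟩ := h
      obtain ⟨ha, hb⟩ := disjoint_append_inj a a' b b' h2
      exact ⟨by rw [h1, ha], hb⟩

end Counting

section ConcatDFA

variable {β₁ β₂ σ₁ σ₂ : Type} (M₁ : DFA β₁ σ₁) (M₂ : DFA β₂ σ₂)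

open Classical in
/-- A DFA over the disjoint union alphabet recognizing
`(map inl '' M₁.accepts) * (map inr '' M₂.accepts)`. -/
noncomputable def concatDFA : DFA (β₁ ⊕ β₂) (Option (σ₁ ⊕ σ₂)) where
  step := fun p x =>
    match p, x with
    | some (Sum.inl s), Sum.inl a => some (Sum.inl (M₁.step s a))
    | some (Sum.inl s), Sum.inr b =>
        if s ∈ M₁.accept then some (Sum.inr (M₂.step M₂.start b)) else none
    | some (Sum.inr _), Sum.inl _ => none
    | some (Sum.inr t), Sum.inr b => some (Sum.inr (M₂.step t b))
    | none, _ => none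
  start := some (Sum.inl M₁.start)
  accept := {p | match p with
    | some (Sum.inl s) => s ∈ M₁.accept ∧ M₂.start ∈ M₂.accept
    | some (Sum.inr t) => t ∈ M₂.accept
    | none => False}

lemma concatDFA_step_inl_inl (s : σ₁) (a : β₁) :
    (concatDFA M₁ M₂).step (some (Sum.inl s)) (Sum.inl a) = some (Sum.inl (M₁.step s a)) := rfl

open Classical in
lemma concatDFA_step_inl_inr (s : σ₁) (b : β₂) :
    (concatDFA M₁ M₂).step (some (Sum.inl s)) (Sum.inr b)
      = if s ∈ M₁.accept then some (Sum.inr (M₂.step M₂.start b)) else none := rfl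

lemma concatDFA_step_inr_inl (t : σ₂) (a : β₁) :
    (concatDFA M₁ M₂).step (some (Sum.inr t)) (Sum.inl a) = none := rfl

lemma concatDFA_step_inr_inr (t : σ₂) (b : β₂) :
    (concatDFA M₁ M₂).step (some (Sum.inr t)) (Sum.inr b)
      = some (Sum.inr (M₂.step t b)) := rfl

lemma concatDFA_accept_inl (s : σ₁) :
    some (Sum.inl s) ∈ (concatDFA M₁ M₂).accept
      ↔ (s ∈ M₁.accept ∧ M₂.start ∈ M₂.accept) := Iff.rfl

lemma concatDFA_accept_inr (t : σ₂) :
    some (Sum.inr t) ∈ (concatDFA M₁ M₂).accept ↔ t ∈ M₂.accept := Iff.rfl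

lemma concatDFA_accept_none : none ∉ (concatDFA M₁ M₂).accept := fun h => h

lemma concatDFA_evalFrom_none : ∀ w : List (β₁ ⊕ β₂),
    (concatDFA M₁ M₂).evalFrom none w = none := by
  intro w
  induction w with
  | nil => rfl
  | cons x w ih =>
    have hstep : (concatDFA M₁ M₂).step none x = none := by cases x <;> rfl
    show (concatDFA M₁ M₂).evalFrom ((concatDFA M₁ M₂).step none x) w = none
    rw [hstep]; exact ih

lemma concatDFA_evalFrom_inl : ∀ (u : List β₁) (s : σ₁),
    (concatDFA M₁ M₂).evalFrom (some (Sum.inl s)) (u.map Sum.inl)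
      = some (Sum.inl (M₁.evalFrom s u)) := by
  intro u
  induction u with
  | nil => intro s; rfl
  | cons a u ih =>
    intro s
    show (concatDFA M₁ M₂).evalFrom
        ((concatDFA M₁ M₂).step (some (Sum.inl s)) (Sum.inl a)) (u.map Sum.inl) = _
    rw [concatDFA_step_inl_inl, ih]
    rfl

lemma concatDFA_evalFrom_inr : ∀ (v : List β₂) (t : σ₂),
    (concatDFA M₁ M₂).evalFrom (some (Sum.inr t)) (v.map Sum.inr)
      = some (Sum.inr (M₂.evalFrom t v)) := by
  intro v
  induction v with
  | nil => intro t; rfl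
  | cons b v ih =>
    intro t
    show (concatDFA M₁ M₂).evalFrom
        ((concatDFA M₁ M₂).step (some (Sum.inr t)) (Sum.inr b)) (v.map Sum.inr) = _
    rw [concatDFA_step_inr_inr, ih]
    rfl

lemma concatDFA_evalFrom_inr_accept : ∀ (w : List (β₁ ⊕ β₂)) (t : σ₂),
    (concatDFA M₁ M₂).evalFrom (some (Sum.inr t)) w ∈ (concatDFA M₁ M₂).accept →
      ∃ v : List β₂, w = v.map Sum.inr ∧ M₂.evalFrom t v ∈ M₂.accept := by
  intro w
  induction w with
  | nil => intro t h; exact ⟨[], rfl, h⟩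
  | cons x w ih =>
    intro t h
    cases x with
    | inl a =>
      exfalso
      have : (concatDFA M₁ M₂).evalFrom
          ((concatDFA M₁ M₂).step (some (Sum.inr t)) (Sum.inl a)) w
            ∈ (concatDFA M₁ M₂).accept := h
      rw [concatDFA_step_inr_inl, concatDFA_evalFrom_none] at this
      exact concatDFA_accept_none M₁ M₂ this
    | inr b =>
      have : (concatDFA M₁ M₂).evalFrom
          ((concatDFA M₁ M₂).step (some (Sum.inr t)) (Sum.inr b)) w
            ∈ (concatDFA M₁ M₂).accept := h
      rw [concatDFA_step_inr_inr] at this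
      obtain ⟨v, hv, hacc⟩ := ih (M₂.step t b) this
      exact ⟨b :: v, by rw [hv]; rfl, hacc⟩

/-- Structure of words over a sum alphabet. -/
lemma sum_word_split : ∀ w : List (β₁ ⊕ β₂),
    (∃ u : List β₁, w = u.map Sum.inl) ∨
    (∃ (u : List β₁) (b : β₂) (w' : List (β₁ ⊕ β₂)),
      w = u.map Sum.inl ++ Sum.inr b :: w') := by
  intro w
  induction w with
  | nil => exact Or.inl ⟨[], rfl⟩
  | cons x w ih =>
    cases x with
    | inl a =>
      rcases ih with ⟨u, rfl⟩ | ⟨u, b, w', rfl⟩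
      · exact Or.inl ⟨a :: u, rfl⟩
      · exact Or.inr ⟨a :: u, b, w', rfl⟩
    | inr b => exact Or.inr ⟨[], b, w, rfl⟩

lemma concatDFA_accepts (w : List (β₁ ⊕ β₂)) :
    w ∈ (concatDFA M₁ M₂).accepts ↔
      ∃ (u : List β₁) (v : List β₂),
        w = u.map Sum.inl ++ v.map Sum.inr ∧ u ∈ M₁.accepts ∧ v ∈ M₂.accepts := by
  rw [DFA.mem_accepts]
  constructor
  · intro h
    rcases sum_word_split (β₁ := β₁) (β₂ := β₂) w with ⟨u, rfl⟩ | ⟨u, b, w', rfl⟩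
    · rw [show (concatDFA M₁ M₂).eval (u.map Sum.inl)
          = (concatDFA M₁ M₂).evalFrom (some (Sum.inl M₁.start)) (u.map Sum.inl) from rfl,
        concatDFA_evalFrom_inl] at h
      obtain ⟨h1, h2⟩ := (concatDFA_accept_inl M₁ M₂ _).1 h
      exact ⟨u, [], by simp, h1, h2⟩
    · rw [show (concatDFA M₁ M₂).eval (u.map Sum.inl ++ Sum.inr b :: w')
          = (concatDFA M₁ M₂).evalFrom
              ((concatDFA M₁ M₂).evalFrom (some (Sum.inl M₁.start)) (u.map Sum.inl))
              (Sum.inr b :: w') from (concatDFA M₁ M₂).evalFrom_of_append _ _ _,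
        concatDFA_evalFrom_inl] at h
      have h' : (concatDFA M₁ M₂).evalFrom
          ((concatDFA M₁ M₂).step (some (Sum.inl (M₁.evalFrom M₁.start u))) (Sum.inr b)) w'
            ∈ (concatDFA M₁ M₂).accept := h
      rw [concatDFA_step_inl_inr] at h'
      by_cases hacc : M₁.evalFrom M₁.start u ∈ M₁.accept
      · rw [if_pos hacc] at h'
        obtain ⟨v, rfl, hv⟩ := concatDFA_evalFrom_inr_accept M₁ M₂ w' _ h'
        exact ⟨u, b :: v, by simp, hacc, hv⟩
      · rw [if_neg hacc, concatDFA_evalFrom_none] at h'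
        exact absurd h' (concatDFA_accept_none M₁ M₂)
  · rintro ⟨u, v, rfl, hu, hv⟩
    rw [show (concatDFA M₁ M₂).eval (u.map Sum.inl ++ v.map Sum.inr)
        = (concatDFA M₁ M₂).evalFrom
            ((concatDFA M₁ M₂).evalFrom (some (Sum.inl M₁.start)) (u.map Sum.inl))
            (v.map Sum.inr) from (concatDFA M₁ M₂).evalFrom_of_append _ _ _,
      concatDFA_evalFrom_inl]
    cases v with
    | nil =>
      exact (concatDFA_accept_inl M₁ M₂ _).2 ⟨hu, hv⟩
    | cons b v' =>
      have hstep : (concatDFA M₁ M₂).evalFrom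
          (some (Sum.inl (M₁.evalFrom M₁.start u))) ((b :: v').map Sum.inr)
            = (concatDFA M₁ M₂).evalFrom
              ((concatDFA M₁ M₂).step (some (Sum.inl (M₁.evalFrom M₁.start u))) (Sum.inr b))
              (v'.map Sum.inr) := rfl
      rw [hstep, concatDFA_step_inl_inr, if_pos (show M₁.evalFrom M₁.start u ∈ M₁.accept from (DFA.mem_accepts M₁).mp hu), concatDFA_evalFrom_inr]
      exact (concatDFA_accept_inr M₁ M₂ _).2 hv

end ConcatDFA

/-- If `L₁, L₂` are counting-regular and `L₁` is a prefix code or `L₂` is a suffix code,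
then `L₁L₂` is counting-regular. -/
theorem stmt11 {α : Type} [Fintype α] (L₁ L₂ : Set (List α))
    (h1 : CountingRegular L₁) (h2 : CountingRegular L₂)
    (hcode : IsPrefixCode L₁ ∨ IsSuffixCode L₂) :
    CountingRegular {w | ∃ u ∈ L₁, ∃ v ∈ L₂, w = u ++ v} := by
  obtain ⟨β₁, i₁, L₁', ⟨σ₁, f₁, M₁, hM₁⟩, hc₁⟩ := h1
  obtain ⟨β₂, i₂, L₂', ⟨σ₂, f₂, M₂, hM₂⟩, hc₂⟩ := h2
  haveI := i₁; haveI := i₂; haveI := f₁; haveI := f₂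
  -- the disjoint-alphabet concatenation
  refine ⟨β₁ ⊕ β₂, inferInstance,
    {w | ∃ u ∈ (List.map Sum.inl '' L₁' : Set (List (β₁ ⊕ β₂))),
      ∃ v ∈ (List.map Sum.inr '' L₂' : Set (List (β₁ ⊕ β₂))), w = u ++ v}, ?_, ?_⟩
  · -- regularity
    refine ⟨Option (σ₁ ⊕ σ₂), inferInstance, concatDFA M₁ M₂, fun w => ?_⟩
    rw [concatDFA_accepts]
    constructor
    · rintro ⟨u, v, rfl, hu, hv⟩
      exact ⟨u.map Sum.inl, ⟨u, (hM₁ u).1 hu, rfl⟩, v.map Sum.inr, ⟨v, (hM₂ v).1 hv, rfl⟩, rfl⟩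
    · rintro ⟨-, ⟨u, hu, rfl⟩, -, ⟨v, hv, rfl⟩, rfl⟩
      exact ⟨u, v, rfl, (hM₁ u).2 hu, (hM₂ v).2 hv⟩
  · -- counting functions agree
    intro n
    -- injectivity over disjoint alphabets
    have hinj₁ : ∀ u ∈ (List.map Sum.inl '' L₁' : Set (List (β₁ ⊕ β₂))),
        ∀ v ∈ (List.map Sum.inr '' L₂' : Set (List (β₁ ⊕ β₂))),
        ∀ u' ∈ (List.map Sum.inl '' L₁' : Set (List (β₁ ⊕ β₂))),
        ∀ v' ∈ (List.map Sum.inr '' L₂' : Set (List (β₁ ⊕ β₂))),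
        u ++ v = u' ++ v' → u = u' ∧ v = v' := by
      rintro - ⟨a, _, rfl⟩ - ⟨b, _, rfl⟩ - ⟨a', _, rfl⟩ - ⟨b', _, rfl⟩ h
      obtain ⟨ha, hb⟩ := disjoint_append_inj a a' b b' h
      exact ⟨by rw [ha], by rw [hb]⟩
    -- injectivity from the code hypothesis
    have hinj₂ : ∀ u ∈ L₁, ∀ v ∈ L₂, ∀ u' ∈ L₁, ∀ v' ∈ L₂,
        u ++ v = u' ++ v' → u = u' ∧ v = v' := by
      intro u hu v hv u' hu' v' hv' h
      rcases hcode with hp | hs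
      · have huu' : u = u' := by
          rcases le_total u.length u'.length with hle | hle
          · exact hp.2 u hu u' hu'
              (List.prefix_of_prefix_length_le (List.prefix_append u v)
                (h ▸ List.prefix_append u' v') hle)
          · exact (hp.2 u' hu' u hu
              (List.prefix_of_prefix_length_le (h ▸ List.prefix_append u' v')
                (List.prefix_append u v) hle)).symm
        subst huu'
        exact ⟨rfl, List.append_cancel_left h⟩
      · have hvv' : v = v' := by
          rcases le_total v.length v'.length with hle | hle
          · exact hs.2 v hv v' hv'
              (List.suffix_of_suffix_length_le (List.suffix_append u v)
                (h ▸ List.suffix_append u' v') hle)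
          · exact (hs.2 v' hv' v hv
              (List.suffix_of_suffix_length_le (h ▸ List.suffix_append u' v')
                (List.suffix_append u v) hle)).symm
        subst hvv'
        exact ⟨List.append_cancel_right h, rfl⟩
    rw [countFn_concat _ _ hinj₁ n, countFn_concat _ _ hinj₂ n]
    refine Finset.sum_congr rfl fun k _ => ?_
    rw [countFn_map_image Sum.inl Sum.inl_injective, countFn_map_image Sum.inr Sum.inr_injective,
      hc₁, hc₂]
end

section
/- There exists a language L ⊆ {a,b}* such that: (i) L is thin, with exactly one word of each length n ≥ 1 and no word of length 0; (ii) L is letter-bounded with L ⊆ a*ba* and every word of L contains exactly one b (so the Parikh image of L equals that of the regular language a*b, hence L is semilinear); (iii) L is counting-regular; and (iv) L is not recursively enumerable (i.e., under any computable encoding of words of {a,b}* as natural numbers, the set of codes of words of L is not computably enumerable). -/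
open Nat.Partrec (Code)

section CountFn

variable {α : Type*}

theorem setOf_mem_range_length_eq_succ {f : ℕ → List α} (hf : ∀ n, (f n).length = n + 1)
    (n : ℕ) : {w | w ∈ Set.range f ∧ w.length = n + 1} = {f n} := by
  ext w
  simp only [Set.mem_ofPred_eq, Set.mem_singleton_iff, Set.mem_range]
  constructor
  · rintro ⟨⟨m, rfl⟩, hm⟩
    rw [hf, Nat.add_right_cancel_iff] at hm
    rw [hm]
  · rintro rfl
    exact ⟨⟨n, rfl⟩, hf n⟩

theorem countFn_range_zero {f : ℕ → List α} (hf : ∀ n, (f n).length = n + 1) :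
    countFn (Set.range f) 0 = 0 := by
  have hempty : {w | w ∈ Set.range f ∧ w.length = 0} = ∅ := by
    ext w
    simp only [Set.mem_ofPred_eq, Set.mem_range, Set.mem_empty_iff_false, iff_false, not_and]
    rintro ⟨m, rfl⟩
    simp [hf]
  rw [countFn, hempty, Set.ncard_empty]

theorem countFn_range_succ {f : ℕ → List α} (hf : ∀ n, (f n).length = n + 1) (n : ℕ) :
    countFn (Set.range f) (n + 1) = 1 := by
  rw [countFn, setOf_mem_range_length_eq_succ hf, Set.ncard_singleton]

theorem countFn_range_eq {β : Type*} {f : ℕ → List α} {g : ℕ → List β}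
    (hf : ∀ n, (f n).length = n + 1) (hg : ∀ n, (g n).length = n + 1) (n : ℕ) :
    countFn (Set.range f) n = countFn (Set.range g) n := by
  cases n with
  | zero => rw [countFn_range_zero hf, countFn_range_zero hg]
  | succ n => rw [countFn_range_succ hf, countFn_range_succ hg]

theorem isRegularLang_ne_nil : IsRegularLang {w : List α | w ≠ []} := by
  refine ⟨Bool, inferInstance, ⟨fun _ _ => true, false, {true}⟩, fun w => ?_⟩
  cases w with
  | nil => simp [DFA.mem_accepts, DFA.eval]
  | cons a w =>
    simp [DFA.mem_accepts, DFA.eval, DFA.evalFrom, List.foldl_fixed']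

theorem range_replicate_succ_unit :
    Set.range (fun n => List.replicate (n + 1) (0 : Fin 1)) = {w | w ≠ []} := by
  ext w
  simp only [Set.mem_range, Set.mem_ofPred_eq]
  constructor
  · rintro ⟨n, rfl⟩
    simp
  · intro hw
    obtain ⟨n, hn⟩ := Nat.exists_eq_succ_of_ne_zero (List.length_pos_iff.2 hw).ne'
    exact ⟨n, (List.eq_replicate_iff.2 ⟨hn, fun b _ => Subsingleton.elim b 0⟩).symm⟩

/-- A language with one word of each positive length counts like `a⁺` over a unary alphabet. -/
theorem countingRegular_range {f : ℕ → List α} (hf : ∀ n, (f n).length = n + 1) :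
    CountingRegular (Set.range f) := by
  refine ⟨Fin 1, inferInstance, {w | w ≠ []}, isRegularLang_ne_nil, fun n => ?_⟩
  rw [← range_replicate_succ_unit]
  exact countFn_range_eq (fun n => List.length_replicate) hf n

end CountFn

theorem REPred.comp {α β : Type*} [Primcodable α] [Primcodable β] {p : β → Prop}
    (hp : REPred p) {f : α → β} (hf : Computable f) : REPred fun a => p (f a) :=
  Partrec.comp hp hf

theorem Primrec.list_replicate_const {α : Type*} [Primcodable α] (a : α) :
    Primrec fun n => List.replicate n a :=
  (Primrec.list_map Primrec.list_range (Primrec.const a).to₂).of_eq fun n => by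
    simp [List.map_const']

/-- Program number `n` halts on input `0`. -/
def Halts (n : ℕ) : Prop :=
  (Code.eval (Denumerable.ofNat Code n) 0).Dom

theorem not_rePred_not_halts : ¬ REPred fun n => ¬ Halts n := fun h =>
  ComputablePred.halting_problem_not_re 0 <|
    (h.comp Computable.encode).of_eq fun c => by rw [Halts, Denumerable.ofNat_encode]

section ThinLang

variable (p : ℕ → Prop)

def abWord (i j : ℕ) : List (Fin 2) :=
  List.replicate i 0 ++ [1] ++ List.replicate j 0

theorem count_zero_abWord (i j : ℕ) : (abWord i j).count 0 = i + j := by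
  simp [abWord]

theorem count_one_abWord (i j : ℕ) : (abWord i j).count 1 = 1 := by
  simp [abWord, List.count_replicate]

open Classical in
noncomputable def thinWord : ℕ → List (Fin 2)
  | 0 => abWord 0 0
  | n + 1 => if p n then abWord (n + 1) 0 else abWord 0 (n + 1)

def thinLang : Set (List (Fin 2)) :=
  Set.range (thinWord p)

theorem exists_thinWord_eq_abWord (n : ℕ) : ∃ i j, i + j = n ∧ thinWord p n = abWord i j := by
  cases n with
  | zero => exact ⟨0, 0, rfl, rfl⟩
  | succ n =>
    by_cases h : p n
    · exact ⟨n + 1, 0, rfl, if_pos h⟩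
    · exact ⟨0, n + 1, zero_add _, if_neg h⟩

theorem count_zero_thinWord (n : ℕ) : (thinWord p n).count 0 = n := by
  obtain ⟨i, j, rfl, h⟩ := exists_thinWord_eq_abWord p n
  rw [h, count_zero_abWord]

theorem count_one_thinWord (n : ℕ) : (thinWord p n).count 1 = 1 := by
  obtain ⟨i, j, -, h⟩ := exists_thinWord_eq_abWord p n
  rw [h, count_one_abWord]

theorem length_thinWord (n : ℕ) : (thinWord p n).length = n + 1 := by
  obtain ⟨i, j, rfl, h⟩ := exists_thinWord_eq_abWord p n
  simp [h, abWord]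
  omega

theorem parikh_thinLang :
    {q : ℕ × ℕ | ∃ w ∈ thinLang p, q = (w.count 0, w.count 1)} = {q : ℕ × ℕ | q.2 = 1} := by
  ext ⟨x, y⟩
  simp only [Set.mem_ofPred_eq, thinLang, Set.exists_range_iff, count_zero_thinWord,
    count_one_thinWord, Prod.mk.injEq]
  constructor
  · rintro ⟨n, -, rfl⟩
    rfl
  · rintro rfl
    exact ⟨x, rfl, rfl⟩

theorem abWord_zero_mem_thinLang_iff (n : ℕ) : abWord 0 (n + 1) ∈ thinLang p ↔ ¬ p n := by
  constructor
  · rintro ⟨m, hm⟩ hp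
    have hlen := congrArg List.length hm
    rw [length_thinWord] at hlen
    obtain rfl : m = n + 1 := by simpa [abWord] using hlen
    rw [thinWord, if_pos hp] at hm
    simp [abWord, List.replicate_succ] at hm
  · intro hp
    exact ⟨n + 1, if_neg hp⟩

theorem rePred_not_of_rePred_mem_thinLang (h : REPred (· ∈ thinLang p)) :
    REPred fun n => ¬ p n := by
  have hword : Computable fun n => abWord 0 (n + 1) :=
    (Primrec.list_cons.comp (Primrec.const 1)
      ((Primrec.list_replicate_const 0).comp Primrec.succ)).to_comp
  exact (h.comp hword).of_eq (abWord_zero_mem_thinLang_iff p)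

end ThinLang

/-- There is a thin, letter-bounded (`⊆ a*ba*`), semilinear, counting-regular language
(over `{a, b}`, with `a = 0`, `b = 1`) that is not recursively enumerable. -/
theorem stmt19 :
    ∃ L : Set (List (Fin 2)),
      (countFn L 0 = 0 ∧ ∀ n, 1 ≤ n → countFn L n = 1) ∧
      (∀ w ∈ L, ∃ i j : ℕ, w = List.replicate i 0 ++ [1] ++ List.replicate j 0) ∧
      ({p : ℕ × ℕ | ∃ w ∈ L, p = (w.count 0, w.count 1)} = {p : ℕ × ℕ | p.2 = 1}) ∧
      CountingRegular L ∧
      ¬ REPred (· ∈ L) := by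
  have hlen := length_thinWord Halts
  refine ⟨thinLang Halts, ⟨countFn_range_zero hlen, fun n hn => ?_⟩, ?_,
    parikh_thinLang Halts, countingRegular_range hlen,
    fun h => not_rePred_not_halts (rePred_not_of_rePred_mem_thinLang Halts h)⟩
  · obtain ⟨n, rfl⟩ := Nat.exists_eq_add_of_le' hn
    exact countFn_range_succ hlen n
  · rintro w ⟨n, rfl⟩
    obtain ⟨i, j, -, h⟩ := exists_thinWord_eq_abWord Halts n
    exact ⟨i, j, h⟩
end
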